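/- arXiv:1204.3211 — 11 statements merged into one kernel-verified Lean document; each statement's English description precedes it below -/
import Mathlib

section
/- Let (S; R) be a positive presentation in which every relation is triangular (one side is a single letter). If u, v, u', v' are positive S-words such that u^{-1}v right-R-reverses to v'u'^{-1}, then at least one of u', v' is the empty word. -/
namespace Stmt2

variable {S : Type*}

/-- A positive word viewed as a signed word (letters tagged `true`). -/
def pos (w : List S) : List (S × Bool) := w.map (fun s => (s, true))

/-- The inverse `w⁻¹` of a positive word, as a signed word (reversed, letters tagged
`false`). -/
def neg (w : List S) : List (S × Bool) := w.reverse.map (fun s => (s, false))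

/-- One step of right-`R`-reversing for a positive presentation `R` (a set of pairs of
positive words): a factor `s⁻¹ s'` is replaced by `v' v⁻¹` where `s v' = s' v` is a
relation of `R`, or a factor `s⁻¹ s` is deleted. -/
inductive RevStep (R : Set (List S × List S)) :
    List (S × Bool) → List (S × Bool) → Prop
  | rel (w₁ w₂ : List (S × Bool)) (s s' : S) (v' v : List S) :
      ((s :: v', s' :: v) ∈ R ∨ (s' :: v, s :: v') ∈ R) →
      RevStep R (w₁ ++ (s, false) :: (s', true) :: w₂) (w₁ ++ pos v' ++ neg v ++ w₂)
  | triv (w₁ w₂ : List (S × Bool)) (s : S) :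
      RevStep R (w₁ ++ (s, false) :: (s, true) :: w₂) (w₁ ++ w₂)

/-- Right-`R`-reversing in finitely many steps. -/
def Rev (R : Set (List S × List S)) : List (S × Bool) → List (S × Bool) → Prop :=
  Relation.ReflTransGen (RevStep R)

/-- **Lemma 3.6.** If `(S; R)` is a positive presentation consisting of triangular
relations, and `u, v, u', v'` are positive `S`-words such that `u⁻¹ v` right-`R`-reverses
to `v' u'⁻¹`, then at least one of `u'`, `v'` is empty. -/
theorem stmt_2 (R : Set (List S × List S))
    (hpos : ∀ p ∈ R, p.1 ≠ [] ∧ p.2 ≠ [])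
    (htri : ∀ p ∈ R, p.1.length = 1 ∨ p.2.length = 1)
    (u v u' v' : List S)
    (h : Rev R (neg u ++ pos v) (pos v' ++ neg u')) :
    u' = [] ∨ v' = [] := by
  -- `Srt w` : no `true` letter occurs before a `false` letter.
  set Srt : List (S × Bool) → Prop :=
    fun w => List.Pairwise (fun a b : S × Bool => b.2 = false → a.2 = false) w with hSrt
  have allFT : ∀ (a b : List (S × Bool)),
      (∀ x ∈ a, x.2 = false) → (∀ x ∈ b, x.2 = true) → Srt (a ++ b) := by
    intro a b ha hb
    simp only [hSrt, List.pairwise_append]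
    refine ⟨List.pairwise_of_forall_mem_list ?_, List.pairwise_of_forall_mem_list ?_, ?_⟩
    · intro x hx y hy _; exact ha x hx
    · intro x hx y hy hy'; rw [hb y hy] at hy'; exact absurd hy' (by simp)
    · intro x hx y hy _; exact ha x hx
  have posT : ∀ (w : List S), ∀ x ∈ pos w, x.2 = true := by
    intro w x hx; simp [pos] at hx; obtain ⟨s, _, rfl⟩ := hx; rfl
  have negF : ∀ (w : List S), ∀ x ∈ neg w, x.2 = false := by
    intro w x hx; simp [neg] at hx; obtain ⟨s, _, rfl⟩ := hx; rfl
  -- sortedness is preserved by reversing steps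
  have step : ∀ w w', RevStep R w w' → Srt w → Srt w' := by
    intro w w' hstep hw
    cases hstep with
    | rel w₁ w₂ s s' vv' vv hR =>
        simp only [hSrt, List.pairwise_append] at hw
        obtain ⟨h₁, h₂, h₁₂⟩ := hw
        have hF : ∀ x ∈ w₁, x.2 = false := by
          intro x hx
          exact h₁₂ x hx (s, false) (by simp) rfl
        have hT : ∀ x ∈ w₂, x.2 = true := by
          intro x hx
          rcases List.pairwise_cons.mp (List.pairwise_cons.mp h₂).2 with ⟨h3, _⟩
          by_contra hc
          simp at hc
          exact absurd (h3 x hx hc) (by simp)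
        have hone : vv' = [] ∨ vv = [] := by
          rcases hR with hR | hR
          · rcases htri _ hR with h1 | h1
            · left; simpa using h1
            · right; simpa using h1
          · rcases htri _ hR with h1 | h1
            · right; simpa using h1
            · left; simpa using h1
        rcases hone with rfl | rfl
        · have : w₁ ++ pos ([] : List S) ++ neg vv ++ w₂ = (w₁ ++ neg vv) ++ w₂ := by
            simp [pos]
          rw [this]
          refine allFT _ _ ?_ hT
          intro x hx
          rcases List.mem_append.mp hx with hx | hx
          · exact hF x hx
          · exact negF vv x hx
        · have : w₁ ++ pos vv' ++ neg ([] : List S) ++ w₂ = w₁ ++ (pos vv' ++ w₂) := by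
            simp [neg]
          rw [this]
          refine allFT _ _ hF ?_
          intro x hx
          rcases List.mem_append.mp hx with hx | hx
          · exact posT vv' x hx
          · exact hT x hx
    | triv w₁ w₂ s =>
        simp only [hSrt, List.pairwise_append] at hw
        obtain ⟨h₁, h₂, h₁₂⟩ := hw
        have hF : ∀ x ∈ w₁, x.2 = false := by
          intro x hx
          exact h₁₂ x hx (s, false) (by simp) rfl
        have hT : ∀ x ∈ w₂, x.2 = true := by
          intro x hx
          rcases List.pairwise_cons.mp (List.pairwise_cons.mp h₂).2 with ⟨h3, _⟩
          by_contra hc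
          simp at hc
          exact absurd (h3 x hx hc) (by simp)
        exact allFT _ _ hF hT
  have hfin : Srt (pos v' ++ neg u') := by
    have h0 : Srt (neg u ++ pos v) := allFT _ _ (negF u) (posT v)
    have mono : ∀ w w', Rev R w w' → Srt w → Srt w' := by
      intro w w' hrev
      induction hrev with
      | refl => exact id
      | tail _ hst ih => exact fun hw => step _ _ hst (ih hw)
    exact mono _ _ h h0
  -- conclude
  by_contra hc
  push_neg at hc
  obtain ⟨hu', hv'⟩ := hc
  obtain ⟨a, ta, rfl⟩ := List.exists_cons_of_ne_nil hv'
  obtain ⟨b, tb, rfl⟩ := List.exists_cons_of_ne_nil hu'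
  simp only [hSrt, List.pairwise_append] at hfin
  have := hfin.2.2 (a, true) (by simp [pos]) (b, false) (by simp [neg]) rfl
  simp at this

end Stmt2
end

section
/- Let (S; R) be a positive presentation complete for right-reversing. For elements g, h of the monoid ⟨S | R⟩⁺, the following are equivalent: (i) g and h admit a common right-multiple; (ii) for some S-words u, v representing g, h, the right-reversing of u^{-1}v terminates with a positive–negative word; (iii) the same for all S-words u, v representing g, h. -/
namespace Stmt3

variable {S : Type*}

/-- A positive word viewed as a signed word. -/
def pos (w : List S) : List (S × Bool) := w.map (fun s => (s, true))

/-- The inverse `w⁻¹` of a positive word, as a signed word. -/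
def neg (w : List S) : List (S × Bool) := w.reverse.map (fun s => (s, false))

/-- One step of right-`R`-reversing. -/
inductive RevStep (R : Set (List S × List S)) :
    List (S × Bool) → List (S × Bool) → Prop
  | rel (w₁ w₂ : List (S × Bool)) (s s' : S) (v' v : List S) :
      ((s :: v', s' :: v) ∈ R ∨ (s' :: v, s :: v') ∈ R) →
      RevStep R (w₁ ++ (s, false) :: (s', true) :: w₂) (w₁ ++ pos v' ++ neg v ++ w₂)
  | triv (w₁ w₂ : List (S × Bool)) (s : S) :
      RevStep R (w₁ ++ (s, false) :: (s, true) :: w₂) (w₁ ++ w₂)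

/-- Right-`R`-reversing in finitely many steps. -/
def Rev (R : Set (List S × List S)) : List (S × Bool) → List (S × Bool) → Prop :=
  Relation.ReflTransGen (RevStep R)

/-- The congruence `≡⁺_R` on positive words generated by the relations of `R`. -/
def posCon (R : Set (List S × List S)) : Con (FreeMonoid S) :=
  conGen (fun a b => (FreeMonoid.toList a, FreeMonoid.toList b) ∈ R)

/-- The monoid `⟨S | R⟩⁺` presented by the positive presentation `(S; R)`. -/
def PresMonoid (R : Set (List S × List S)) : Type _ := (posCon R).Quotient

instance (R : Set (List S × List S)) : Monoid (PresMonoid R) :=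
  inferInstanceAs (Monoid (posCon R).Quotient)

/-- The element of `⟨S | R⟩⁺` represented by a positive word. -/
def cls (R : Set (List S × List S)) (u : List S) : PresMonoid R :=
  ((FreeMonoid.ofList u : FreeMonoid S) : (posCon R).Quotient)

/-- `(S; R)` is complete for right-reversing: `u ≡⁺_R v` implies that `u⁻¹ v`
right-`R`-reverses to the empty word. -/
def Complete (R : Set (List S × List S)) : Prop :=
  ∀ u v : List S, posCon R (FreeMonoid.ofList u) (FreeMonoid.ofList v) →
    Rev R (neg u ++ pos v) []

/-!
Read a signed word `w` as the relation "`x · w = y`" on `⟨S | R⟩⁺`, a letter `s⁻¹` meaning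
right division by `s`. Reversing steps preserve this relation, so a reversing of `u⁻¹ v` to
`v' u'⁻¹` witnesses `u v' = v u'`, a common right-multiple. Conversely, if `u a ≡⁺_R v b`,
completeness reverses `a⁻¹ u⁻¹ v b` to the empty word; following that reversing inside the
factor `u⁻¹ v`, and dropping the letters that leave it across its left or right end, yields a
reversing of `u⁻¹ v` to a positive–negative word.
-/

section Words

@[simp] lemma pos_cons (s : S) (w : List S) : pos (s :: w) = (s, true) :: pos w := rfl

@[simp] lemma neg_cons (s : S) (w : List S) : neg (s :: w) = neg w ++ [(s, false)] := by
  simp [neg]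

lemma pos_append (u v : List S) : pos (u ++ v) = pos u ++ pos v := by
  simp [pos]

lemma neg_append (u v : List S) : neg (u ++ v) = neg v ++ neg u := by
  simp [neg]

lemma List.append_cons_cons_eq_append_cases {α : Type*} {w₁ w₂ X Y : List α} {a b : α}
    (h : w₁ ++ a :: b :: w₂ = X ++ Y) :
    (∃ k, X = w₁ ++ a :: b :: k ∧ w₂ = k ++ Y) ∨
    (X = w₁ ++ [a] ∧ Y = b :: w₂) ∨
    (∃ k, Y = k ++ a :: b :: w₂ ∧ w₁ = X ++ k) := by
  rcases List.append_eq_append_iff.mp h with ⟨k, rfl, hk⟩ | ⟨k, rfl, rfl⟩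
  · match k, hk with
    | [], hk => exact Or.inr <| Or.inr ⟨[], by simpa using hk.symm, by simp⟩
    | [c], hk =>
      obtain ⟨rfl, rfl⟩ := List.cons_eq_cons.mp hk
      exact Or.inr <| Or.inl ⟨rfl, rfl⟩
    | c :: d :: k, hk =>
      simp only [List.cons_append, List.cons.injEq] at hk
      obtain ⟨rfl, rfl, rfl⟩ := hk
      exact Or.inl ⟨k, rfl, rfl⟩
  · exact Or.inr <| Or.inr ⟨k, rfl, rfl⟩

end Words

section Monoid

variable (R : Set (List S × List S))

lemma cls_append (u v : List S) : cls R (u ++ v) = cls R u * cls R v := rfl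

lemma cls_nil : cls R [] = 1 := rfl

lemma cls_surjective : Function.Surjective (cls R) := by
  intro g
  obtain ⟨m, rfl⟩ := Quot.exists_rep g
  exact ⟨m.toList, rfl⟩

variable {R}

lemma cls_eq_of_mem {a b : List S} (h : (a, b) ∈ R) : cls R a = cls R b :=
  (Con.eq _).mpr <| ConGen.Rel.of _ _ (by simpa using h)

end Monoid

section Reversing

variable {R : Set (List S × List S)}

lemma RevStep.exists_redex {w w' : List (S × Bool)} (h : RevStep R w w') :
    ∃ w₁ w₂ s s' m, w = w₁ ++ (s, false) :: (s', true) :: w₂ ∧ w' = w₁ ++ m ++ w₂ ∧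
      ∀ x₁ x₂, RevStep R (x₁ ++ (s, false) :: (s', true) :: x₂) (x₁ ++ m ++ x₂) := by
  cases h with
  | rel w₁ w₂ s s' v' v hR =>
    exact ⟨w₁, w₂, s, s', pos v' ++ neg v, rfl, by simp,
      fun x₁ x₂ => by simpa using RevStep.rel x₁ x₂ s s' v' v hR⟩
  | triv w₁ w₂ s =>
    exact ⟨w₁, w₂, s, s, [], rfl, by simp, fun x₁ x₂ => by simpa using RevStep.triv x₁ x₂ s⟩

lemma RevStep.cons {w w' : List (S × Bool)} (c : S × Bool) (h : RevStep R w w') :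
    RevStep R (c :: w) (c :: w') := by
  obtain ⟨w₁, w₂, s, s', m, rfl, rfl, hctx⟩ := h.exists_redex
  simpa using hctx (c :: w₁) w₂

lemma RevStep.append_right {w w' : List (S × Bool)} (t : List (S × Bool))
    (h : RevStep R w w') : RevStep R (w ++ t) (w' ++ t) := by
  obtain ⟨w₁, w₂, s, s', m, rfl, rfl, hctx⟩ := h.exists_redex
  simpa using hctx w₁ (w₂ ++ t)

lemma Rev.cons {w w' : List (S × Bool)} (c : S × Bool) (h : Rev R w w') :
    Rev R (c :: w) (c :: w') :=
  Relation.ReflTransGen.lift (c :: ·) (fun _ _ => RevStep.cons c) _ _ h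

lemma Rev.append_right {w w' : List (S × Bool)} (t : List (S × Bool)) (h : Rev R w w') :
    Rev R (w ++ t) (w' ++ t) :=
  Relation.ReflTransGen.lift (· ++ t) (fun _ _ => RevStep.append_right t) _ _ h

theorem Rev.exists_pos_neg_of_append_of_nil {W : List (S × Bool)} (hW : Rev R W []) :
    ∀ L x P, W = L ++ x ++ P → ∃ p q : List S, Rev R x (pos p ++ neg q) := by
  induction hW using Relation.ReflTransGen.head_induction_on with
  | refl =>
    intro L x P h
    obtain ⟨-, rfl, -⟩ : L = [] ∧ x = [] ∧ P = [] := by simpa using h.symm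
    exact ⟨[], [], .refl⟩
  | head hstep _ ih =>
    intro L x P hW
    obtain ⟨w₁, w₂, s, s', m, rfl, rfl, hctx⟩ := hstep.exists_redex
    rw [List.append_assoc] at hW
    rcases List.append_cons_cons_eq_append_cases hW with
      ⟨k, rfl, rfl⟩ | ⟨rfl, hxP⟩ | ⟨k, hxP, rfl⟩
    · exact ih (w₁ ++ m ++ k) x P (by simp)
    · -- the redex crosses the left end of `x`, whose first letter is dropped
      rcases x with _ | ⟨c, x⟩
      · exact ⟨[], [], .refl⟩
      obtain ⟨rfl, rfl⟩ := List.cons_eq_cons.mp hxP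
      obtain ⟨p, q, hx⟩ := ih (w₁ ++ m) x P (by simp)
      exact ⟨s' :: p, q, by simpa using hx.cons (s', true)⟩
    rcases List.append_cons_cons_eq_append_cases hxP.symm with
      ⟨k', rfl, rfl⟩ | ⟨rfl, rfl⟩ | ⟨k', rfl, rfl⟩
    · obtain ⟨p, q, hx⟩ := ih L (k ++ m ++ k') P (by simp)
      exact ⟨p, q, .head (hctx k k') hx⟩
    · -- the redex crosses the right end of `x`, whose last letter is dropped
      obtain ⟨p, q, hx⟩ := ih L k (m ++ w₂) (by simp)
      exact ⟨p, s :: q, by simpa using hx.append_right [(s, false)]⟩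
    · exact ih L x (k' ++ m ++ w₂) (by simp)

end Reversing

section Semantics

variable (R : Set (List S × List S))

/-- `Sem R w x y` says `x · w = y` in `⟨S | R⟩⁺`, a negative letter `s⁻¹` being read as right
division by `s`. -/
def Sem : List (S × Bool) → PresMonoid R → PresMonoid R → Prop
  | [], x, y => x = y
  | (s, true) :: w, x, y => Sem w (x * cls R [s]) y
  | (s, false) :: w, x, y => ∃ z, x = z * cls R [s] ∧ Sem w z y

variable {R}

lemma sem_append (w₁ w₂ : List (S × Bool)) (x y : PresMonoid R) :
    Sem R (w₁ ++ w₂) x y ↔ ∃ z, Sem R w₁ x z ∧ Sem R w₂ z y := by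
  induction w₁ generalizing x with
  | nil => simp [Sem]
  | cons c w₁ ih =>
    obtain ⟨s, _ | _⟩ := c <;> simp [Sem, ih]
    tauto

lemma sem_pos (w : List S) (x y : PresMonoid R) : Sem R (pos w) x y ↔ y = x * cls R w := by
  induction w generalizing x with
  | nil => simp [Sem, pos, cls_nil, eq_comm]
  | cons s w ih =>
    simp only [pos_cons, Sem, ih, mul_assoc]
    rfl

lemma sem_neg (w : List S) (x y : PresMonoid R) : Sem R (neg w) x y ↔ x = y * cls R w := by
  induction w generalizing x y with
  | nil => simp [Sem, neg, cls_nil]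
  | cons s w ih =>
    rw [show cls R (s :: w) = cls R [s] * cls R w from cls_append R [s] w, ← mul_assoc]
    simp [sem_append, ih, Sem]

lemma RevStep.sem {w w' : List (S × Bool)} (h : RevStep R w w') {x y : PresMonoid R}
    (hw : Sem R w x y) : Sem R w' x y := by
  cases h with
  | rel w₁ w₂ s s' v' v hR =>
    have hsv : cls R [s] * cls R v' = cls R [s'] * cls R v :=
      hR.elim cls_eq_of_mem (fun h => (cls_eq_of_mem h).symm)
    simp only [sem_append, Sem] at hw
    obtain ⟨z, hz, t, rfl, hw₂⟩ := hw
    simp only [sem_append, sem_pos, sem_neg, List.append_assoc, exists_eq_left]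
    exact ⟨_, hz, _, by rw [mul_assoc, hsv, mul_assoc], hw₂⟩
  | triv w₁ w₂ s =>
    simp only [sem_append, Sem] at hw ⊢
    obtain ⟨z, hz, t, rfl, hw₂⟩ := hw
    exact ⟨_, hz, hw₂⟩

lemma Rev.sem {w w' : List (S × Bool)} (h : Rev R w w') {x y : PresMonoid R}
    (hw : Sem R w x y) : Sem R w' x y := by
  induction h with
  | refl => exact hw
  | tail _ hstep ih => exact hstep.sem ih

lemma cls_mul_eq_of_rev {u v u' v' : List S} (h : Rev R (neg u ++ pos v) (pos v' ++ neg u')) :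
    cls R u * cls R v' = cls R v * cls R u' := by
  have huv : Sem R (neg u ++ pos v) (cls R u) (cls R v) :=
    (sem_append _ _ _ _).mpr ⟨1, (sem_neg _ _ _).mpr (one_mul _).symm,
      (sem_pos _ _ _).mpr (one_mul _).symm⟩
  obtain ⟨z, hz, hz'⟩ := (sem_append _ _ _ _).mp (h.sem huv)
  rw [sem_pos] at hz
  rw [sem_neg] at hz'
  rw [← hz, hz']

lemma exists_common_mul_of_rev {u v u' v' : List S}
    (h : Rev R (neg u ++ pos v) (pos v' ++ neg u')) :
    ∃ f : PresMonoid R, cls R u ∣ f ∧ cls R v ∣ f :=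
  ⟨cls R u * cls R v', dvd_mul_right _ _, cls R u', cls_mul_eq_of_rev h⟩

end Semantics

lemma Complete.exists_rev_pos_neg {R : Set (List S × List S)} (hcomp : Complete R)
    {u v : List S} {f : PresMonoid R} (hu : cls R u ∣ f) (hv : cls R v ∣ f) :
    ∃ u' v' : List S, Rev R (neg u ++ pos v) (pos v' ++ neg u') := by
  obtain ⟨c, hc⟩ := hu
  obtain ⟨d, hd⟩ := hv
  obtain ⟨a, rfl⟩ := cls_surjective R c
  obtain ⟨b, rfl⟩ := cls_surjective R d
  have hab : cls R (u ++ a) = cls R (v ++ b) := by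
    rw [cls_append, cls_append, ← hc, ← hd]
  have hrev := hcomp (u ++ a) (v ++ b) ((Con.eq _).mp hab)
  rw [neg_append, pos_append] at hrev
  obtain ⟨p, q, hpq⟩ := hrev.exists_pos_neg_of_append_of_nil (neg a) (neg u ++ pos v) (pos b)
    (by simp)
  exact ⟨q, p, hpq⟩

theorem stmt_3_general (R : Set (List S × List S))
    (hcomp : Complete R) (g h : PresMonoid R) :
    ((∃ f : PresMonoid R, g ∣ f ∧ h ∣ f) ↔
        (∃ u v u' v' : List S, cls R u = g ∧ cls R v = h ∧
          Rev R (neg u ++ pos v) (pos v' ++ neg u'))) ∧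
    ((∃ f : PresMonoid R, g ∣ f ∧ h ∣ f) ↔
        (∀ u v : List S, cls R u = g → cls R v = h →
          ∃ u' v' : List S, Rev R (neg u ++ pos v) (pos v' ++ neg u'))) := by
  obtain ⟨u, rfl⟩ := cls_surjective R g
  obtain ⟨v, rfl⟩ := cls_surjective R h
  have to_rev : (∃ f : PresMonoid R, cls R u ∣ f ∧ cls R v ∣ f) →
      ∀ u₀ v₀ : List S, cls R u₀ = cls R u → cls R v₀ = cls R v →
        ∃ u' v' : List S, Rev R (neg u₀ ++ pos v₀) (pos v' ++ neg u') := by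
    rintro ⟨f, hu, hv⟩ u₀ v₀ hu₀ hv₀
    exact hcomp.exists_rev_pos_neg (hu₀ ▸ hu) (hv₀ ▸ hv)
  refine ⟨⟨fun hf => ?_, ?_⟩, ⟨to_rev, fun hall => ?_⟩⟩
  · obtain ⟨u', v', hrev⟩ := to_rev hf u v rfl rfl
    exact ⟨u, v, u', v', rfl, rfl, hrev⟩
  · rintro ⟨u₀, v₀, u', v', hu, hv, hrev⟩
    exact hu ▸ hv ▸ exists_common_mul_of_rev hrev
  · obtain ⟨u', v', hrev⟩ := hall u v rfl rfl
    exact exists_common_mul_of_rev hrev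

/-- **Lemma 4.3.** If the positive presentation `(S; R)` is complete for right-reversing,
then for `g, h` in `⟨S | R⟩⁺` the following are equivalent: (i) `g` and `h` admit a common
right-multiple; (ii) for some words `u, v` representing `g, h`, the reversing of `u⁻¹ v`
terminates with a positive–negative word; (iii) the same holds for all such words. -/
theorem stmt_3 (R : Set (List S × List S))
    (hpres : ∀ p ∈ R, p.1 ≠ [] ∧ p.2 ≠ [])
    (hcomp : Complete R) (g h : PresMonoid R) :
    ((∃ f : PresMonoid R, g ∣ f ∧ h ∣ f) ↔
        (∃ u v u' v' : List S, cls R u = g ∧ cls R v = h ∧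
          Rev R (neg u ++ pos v) (pos v' ++ neg u'))) ∧
    ((∃ f : PresMonoid R, g ∣ f ∧ h ∣ f) ↔
        (∀ u v : List S, cls R u = g → cls R v = h →
          ∃ u' v' : List S, Rev R (neg u ++ pos v) (pos v' ++ neg u'))) :=
  stmt_3_general R hcomp g h

end Stmt3
end

section
/- Let M be a left-cancellative monoid generated by S and let w be a right-top S-word, i.e., every element of S^{|w|} left-divides [w]. Then (i) every element of S^{≤|w|} left-divides [w], and (ii) every final fragment (suffix) of w is again a right-top word. -/
namespace Stmt7

/-- `g` is a product of `n` elements of `S`. -/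
def InPow {M : Type*} [Monoid M] (S : Set M) (n : ℕ) (g : M) : Prop :=
  ∃ l : List M, l.length = n ∧ (∀ x ∈ l, x ∈ S) ∧ l.prod = g

/-- **Lemma 5.3 (i)-(ii).** Let `M` be a left-cancellative monoid generated by `S` and
let `w` be a right-top `S`-word, i.e., every element of `S^{|w|}` left-divides `[w]`.
Then every element of `S^n` with `n ≤ |w|` left-divides `[w]`, and every final fragment
(suffix) of `w` is again a right-top word. -/
theorem stmt_7 {M : Type*} [Monoid M] (S : Set M)
    (hcancel : ∀ a b c : M, a * b = a * c → b = c)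
    (hgen : Submonoid.closure S = ⊤)
    (w : List M) (hw : ∀ x ∈ w, x ∈ S)
    (htop : ∀ g : M, InPow S w.length g → g ∣ w.prod) :
    (∀ n ≤ w.length, ∀ g : M, InPow S n g → g ∣ w.prod) ∧
    (∀ w₁ w₂ : List M, w = w₁ ++ w₂ →
      ∀ g : M, InPow S w₂.length g → g ∣ w₂.prod) := by
  constructor
  · intro n hn g hg
    rcases Nat.eq_or_lt_of_le hn with heq | hlt
    · exact htop g (heq ▸ hg)
    · have hw0 : 0 < w.length := lt_of_le_of_lt (Nat.zero_le n) hlt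
      obtain ⟨s, hs⟩ := List.exists_mem_of_length_pos hw0
      have hsS := hw s hs
      obtain ⟨l, hl, hlS, hlp⟩ := hg
      have hpow : InPow S w.length (g * (List.replicate (w.length - n) s).prod) := by
        refine ⟨l ++ List.replicate (w.length - n) s, ?_, ?_, ?_⟩
        · simp [hl]; omega
        · intro x hx
          rcases List.mem_append.1 hx with h | h
          · exact hlS x h
          · rw [List.eq_of_mem_replicate h]; exact hsS
        · simp [hlp]
      exact dvd_trans ⟨_, rfl⟩ (htop _ hpow)
  · rintro w₁ w₂ rfl g ⟨l, hl, hlS, hlp⟩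
    have h1 : InPow S (w₁ ++ w₂).length (w₁.prod * g) := by
      refine ⟨w₁ ++ l, by simp [hl], ?_, by simp [hlp]⟩
      intro x hx
      rcases List.mem_append.1 hx with h | h
      · exact hw x (List.mem_append_left _ h)
      · exact hlS x h
    obtain ⟨c, hc⟩ := htop _ h1
    refine ⟨c, hcancel w₁.prod _ _ ?_⟩
    rw [← mul_assoc, ← hc, List.prod_append]

end Stmt7
end

section
/- Let M be a cancellative monoid with no nontrivial invertible element, generated by S. Then for each ℓ there is at most one right-top S-word of length ℓ, and there is at most one right-S-ceiling in M; when it exists, every right-top word is a final fragment of the ceiling. -/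
namespace Stmt8

variable {M : Type*} [Monoid M]

/-- `g` is a product of `n` elements of `S`. -/
def InPow (S : Set M) (n : ℕ) (g : M) : Prop :=
  ∃ l : List M, l.length = n ∧ (∀ x ∈ l, x ∈ S) ∧ l.prod = g

/-- `w` is a right-top `S`-word: a word over `S` whose value is left-divisible by every
product of `|w|` elements of `S`. -/
def RightTop (S : Set M) (w : List M) : Prop :=
  (∀ x ∈ w, x ∈ S) ∧ ∀ g : M, InPow S w.length g → g ∣ w.prod

/-- `c` encodes a right-`S`-ceiling `… s₂ s₁` (with `c k = s_{k+1}`): for every `n` the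
word `s_n ⋯ s₁` is a right-top `S`-word. -/
def IsCeiling (S : Set M) (c : ℕ → M) : Prop :=
  ∀ n : ℕ, RightTop S (((List.range n).map c).reverse)

/-! Two right-top words of the same length left-divide each other's values, so, as there are
no nontrivial units, their values agree. Their tails are again right-top, hence equal by
induction, and right cancellation then identifies the first letters. Ceilings are unique
because all their final fragments are right-top words. -/

theorem dvd_antisymm_of_mul_eq_one [IsLeftCancelMul M]
    (hunits : ∀ a b : M, a * b = 1 → a = 1) {a b : M} (hab : a ∣ b) (hba : b ∣ a) :
    a = b := by
  obtain ⟨u, rfl⟩ := hab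
  obtain ⟨v, hv⟩ := hba
  have huv : a * (u * v) = a * 1 := by rw [mul_one, ← mul_assoc, ← hv]
  rw [hunits u v (mul_left_cancel huv), mul_one]

theorem InPow.cons {S : Set M} {n : ℕ} {s g : M} (hs : s ∈ S) (hg : InPow S n g) :
    InPow S (n + 1) (s * g) := by
  obtain ⟨l, hl, hlS, rfl⟩ := hg
  exact ⟨s :: l, by simp [hl], by simpa using ⟨hs, hlS⟩, List.prod_cons⟩

namespace RightTop

variable {S : Set M}

theorem inPow {w : List M} (hw : RightTop S w) : InPow S w.length w.prod :=
  ⟨w, rfl, hw.1, rfl⟩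

theorem of_cons [IsLeftCancelMul M] {s : M} {t : List M} (h : RightTop S (s :: t)) :
    RightTop S t := by
  refine ⟨fun x hx => h.1 x (List.mem_cons_of_mem _ hx), fun g hg => ?_⟩
  obtain ⟨u, hu⟩ := h.2 _ (hg.cons (h.1 s List.mem_cons_self))
  exact ⟨u, mul_left_cancel (a := s) (by rwa [List.prod_cons, mul_assoc] at hu)⟩

theorem prod_eq [IsLeftCancelMul M] (hunits : ∀ a b : M, a * b = 1 → a = 1)
    {w w' : List M} (hw : RightTop S w) (hw' : RightTop S w') (hlen : w.length = w'.length) :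
    w.prod = w'.prod :=
  dvd_antisymm_of_mul_eq_one hunits (hw'.2 _ (hlen ▸ hw.inPow)) (hw.2 _ (hlen ▸ hw'.inPow))

theorem eq_of_length_eq [IsCancelMul M] (hunits : ∀ a b : M, a * b = 1 → a = 1)
    {w w' : List M} (hw : RightTop S w) (hw' : RightTop S w') (hlen : w.length = w'.length) :
    w = w' := by
  induction w generalizing w' with
  | nil => exact (List.length_eq_zero_iff.mp hlen.symm).symm
  | cons s t ih =>
    obtain _ | ⟨s', t'⟩ := w'
    · simp at hlen
    have htail : t = t' := ih hw.of_cons hw'.of_cons (by simpa using hlen)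
    have hprod := hw.prod_eq hunits hw' hlen
    rw [List.prod_cons, List.prod_cons, htail] at hprod
    rw [mul_right_cancel hprod, htail]

theorem eq_ceiling [IsCancelMul M] (hunits : ∀ a b : M, a * b = 1 → a = 1)
    {c : ℕ → M} (hc : IsCeiling S c) {w : List M} (hw : RightTop S w) :
    w = ((List.range w.length).map c).reverse :=
  hw.eq_of_length_eq hunits (hc w.length) (by simp)

end RightTop

theorem IsCeiling.eq [IsCancelMul M] (hunits : ∀ a b : M, a * b = 1 → a = 1)
    {S : Set M} {c c' : ℕ → M} (hc : IsCeiling S c) (hc' : IsCeiling S c') : c = c' := by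
  funext n
  have h := (hc (n + 1)).eq_of_length_eq hunits (hc' (n + 1)) (by simp)
  simp only [List.range_succ, List.map_append, List.map_singleton, List.reverse_append,
    List.reverse_singleton, List.singleton_append, List.cons.injEq] at h
  exact h.1

theorem stmt_8_general (S : Set M)
    (hlcancel : ∀ a b c : M, a * b = a * c → b = c)
    (hrcancel : ∀ a b c : M, a * c = b * c → a = b)
    (hunits : ∀ a b : M, a * b = 1 → a = 1) :
    (∀ w w' : List M, RightTop S w → RightTop S w' → w.length = w'.length → w = w') ∧
    (∀ c c' : ℕ → M, IsCeiling S c → IsCeiling S c' → c = c') ∧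
    (∀ c : ℕ → M, IsCeiling S c → ∀ w : List M, RightTop S w →
      w = ((List.range w.length).map c).reverse) := by
  have : IsCancelMul M :=
    { mul_left_cancel := fun a b c => hlcancel a b c
      mul_right_cancel := fun a b c => hrcancel b c a }
  exact ⟨fun _ _ hw hw' hlen => hw.eq_of_length_eq hunits hw' hlen,
    fun _ _ hc hc' => hc.eq hunits hc',
    fun _ hc _ hw => hw.eq_ceiling hunits hc⟩

/-- **Lemma 5.4.** In a cancellative monoid with no nontrivial invertible element,
generated by `S`, there is at most one right-top `S`-word of each length, at most one
right-`S`-ceiling, and every right-top word is a final fragment of the ceiling. -/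
theorem stmt_8 (S : Set M)
    (hlcancel : ∀ a b c : M, a * b = a * c → b = c)
    (hrcancel : ∀ a b c : M, a * c = b * c → a = b)
    (hunits : ∀ a b : M, a * b = 1 → a = 1)
    (hgen : Submonoid.closure S = ⊤) :
    (∀ w w' : List M, RightTop S w → RightTop S w' → w.length = w'.length → w = w') ∧
    (∀ c c' : ℕ → M, IsCeiling S c → IsCeiling S c' → c = c') ∧
    (∀ c : ℕ → M, IsCeiling S c → ∀ w : List M, RightTop S w →
      w = ((List.range w.length).map c).reverse) :=
  stmt_8_general S hlcancel hrcancel hunits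

end Stmt8
end

section
/- Let M be a monoid and δ ∈ M an element that right-dominates a subset S of M (i.e., gδⁿ ≼ δ^{n+1} for every n ≥ 0 and g ∈ S). Then g ≼ δⁿ for every n and every g ∈ Sⁿ, and any two elements of the submonoid of M generated by S admit a common right-multiple. -/
/-!
Peeling off one generator at a time: if `g₂ ⋯ gₖ δᵐ ≼ δ^{k-1+m}`, then multiplying on the left
by `g₁` and applying domination gives `g₁ ⋯ gₖ δᵐ ≼ g₁ δ^{k-1+m} ≼ δ^{k+m}`. Hence every element
of the submonoid generated by `S` left-divides some power of `δ`, and two such elements have the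
larger power as a common right-multiple.
-/

namespace Stmt10

/-- `g` is a product of `n` elements of `S`. -/
def InPow {M : Type*} [Monoid M] (S : Set M) (n : ℕ) (g : M) : Prop :=
  ∃ l : List M, l.length = n ∧ (∀ x ∈ l, x ∈ S) ∧ l.prod = g

section

variable {M : Type*} [Monoid M] {S : Set M} {δ : M}

lemma list_prod_mul_pow_dvd_pow (hdom : ∀ n : ℕ, ∀ g ∈ S, g * δ ^ n ∣ δ ^ (n + 1)) :
    ∀ (l : List M), (∀ x ∈ l, x ∈ S) → ∀ m : ℕ, l.prod * δ ^ m ∣ δ ^ (l.length + m)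
  | [], _, m => by simp
  | x :: t, hl, m =>
    calc (x :: t).prod * δ ^ m = x * (t.prod * δ ^ m) := by rw [List.prod_cons, mul_assoc]
      _ ∣ x * δ ^ (t.length + m) :=
        mul_dvd_mul_left x
          (list_prod_mul_pow_dvd_pow hdom t (fun y hy => hl y (List.mem_cons_of_mem x hy)) m)
      _ ∣ δ ^ (t.length + m + 1) := hdom _ x (hl x List.mem_cons_self)
      _ = δ ^ ((x :: t).length + m) := by rw [List.length_cons, Nat.add_right_comm]

lemma InPow.dvd_pow (hdom : ∀ n : ℕ, ∀ g ∈ S, g * δ ^ n ∣ δ ^ (n + 1)) {n : ℕ} {g : M}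
    (hg : InPow S n g) : g ∣ δ ^ n := by
  obtain ⟨l, rfl, hl, rfl⟩ := hg
  simpa using list_prod_mul_pow_dvd_pow hdom l hl 0

lemma exists_dvd_pow_of_mem_closure (hdom : ∀ n : ℕ, ∀ g ∈ S, g * δ ^ n ∣ δ ^ (n + 1))
    {g : M} (hg : g ∈ Submonoid.closure S) : ∃ n : ℕ, g ∣ δ ^ n := by
  obtain ⟨l, hl, rfl⟩ := Submonoid.exists_list_of_mem_closure hg
  exact ⟨l.length, InPow.dvd_pow hdom ⟨l, rfl, hl, rfl⟩⟩

end

/-- **Lemma 5.7.** If `δ` right-dominates a subset `S` of a monoid `M`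
(`g δⁿ ≼ δ^{n+1}` for all `n ≥ 0` and `g ∈ S`), then `g ≼ δⁿ` for every `g ∈ Sⁿ`,
and any two elements of the submonoid generated by `S` admit a common right-multiple. -/
theorem stmt_10 {M : Type*} [Monoid M] (S : Set M) (δ : M)
    (hdom : ∀ n : ℕ, ∀ g ∈ S, g * δ ^ n ∣ δ ^ (n + 1)) :
    (∀ n : ℕ, ∀ g : M, InPow S n g → g ∣ δ ^ n) ∧
    (∀ g ∈ Submonoid.closure S, ∀ h ∈ Submonoid.closure S,
      ∃ f : M, g ∣ f ∧ h ∣ f) := by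
  refine ⟨fun n g hg => hg.dvd_pow hdom, fun g hg h hh => ?_⟩
  obtain ⟨a, ha⟩ := exists_dvd_pow_of_mem_closure hdom hg
  obtain ⟨b, hb⟩ := exists_dvd_pow_of_mem_closure hdom hh
  exact ⟨δ ^ max a b, ha.trans (pow_dvd_pow δ (le_max_left a b)),
    hb.trans (pow_dvd_pow δ (le_max_right a b))⟩

end Stmt10
end

section
/- For δ, g in a monoid M, δ right-dominates g if and only if there exists m ≥ 1 such that gδ^{km+m-1} ≼ δ^{km+1} holds for every k ≥ 0. -/
/-- **Lemma 5.8.** For `δ, g` in a monoid `M`, `δ` right-dominates `g`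
(`g δⁿ ∣ δ^{n+1}` for all `n ≥ 0`, where `∣` is left-divisibility) if and only if there
exists `m ≥ 1` such that `g δ^{km+m-1} ∣ δ^{km+1}` holds for every `k ≥ 0`. -/
theorem stmt_12 {M : Type*} [Monoid M] (δ g : M) :
    (∀ n : ℕ, g * δ ^ n ∣ δ ^ (n + 1)) ↔
      ∃ m : ℕ, 1 ≤ m ∧ ∀ k : ℕ, g * δ ^ (k * m + m - 1) ∣ δ ^ (k * m + 1) := by
  constructor
  · intro h
    exact ⟨1, le_refl 1, fun k => by simpa using h k⟩
  · rintro ⟨m, hm, h⟩ n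
    set k := n / m with hk
    have hdm : k * m + n % m = n := by rw [Nat.mul_comm]; exact Nat.div_add_mod n m
    have hlt : n % m < m := Nat.mod_lt n (by omega)
    obtain ⟨z, hz⟩ := h k
    refine ⟨δ ^ (k * m + m - 1 - n) * z * δ ^ (n - k * m), ?_⟩
    have e1 : δ ^ (n + 1) = δ ^ (k * m + 1) * δ ^ (n - k * m) := by
      rw [← pow_add]; congr 1; omega
    have e2 : δ ^ (k * m + m - 1) = δ ^ n * δ ^ (k * m + m - 1 - n) := by
      rw [← pow_add]; congr 1; omega
    rw [e1, hz, e2]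
    simp [mul_assoc]
end

section
/- Let M be a cancellative monoid with no nontrivial invertible element generated by S. Then M admits a right-S-ceiling that is periodic with period s_ℓ⋯s₁ if and only if the element s_ℓ⋯s₁ right-dominates S^ℓ in M. -/
namespace Stmt13

variable {M : Type*} [Monoid M]

def InPow (S : Set M) (n : ℕ) (g : M) : Prop :=
  ∃ l : List M, l.length = n ∧ (∀ x ∈ l, x ∈ S) ∧ l.prod = g

def RightTop (S : Set M) (w : List M) : Prop :=
  (∀ x ∈ w, x ∈ S) ∧ ∀ g : M, InPow S w.length g → g ∣ w.prod

def IsCeiling (S : Set M) (c : ℕ → M) : Prop :=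
  ∀ n : ℕ, RightTop S (((List.range n).map c).reverse)

lemma inPow_mul {S : Set M} {m n : ℕ} {a b : M} (ha : InPow S m a) (hb : InPow S n b) :
    InPow S (m + n) (a * b) := by
  obtain ⟨l1, h1, h1S, h1p⟩ := ha
  obtain ⟨l2, h2, h2S, h2p⟩ := hb
  refine ⟨l1 ++ l2, by simp [h1, h2], ?_, by simp [h1p, h2p]⟩
  intro x hx
  rcases List.mem_append.1 hx with h | h
  · exact h1S x h
  · exact h2S x h

lemma inPow_pow {S : Set M} {l : ℕ} {d : M} (hd : InPow S l d) (n : ℕ) :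
    InPow S (n * l) (d ^ n) := by
  induction n with
  | zero => exact ⟨[], by simp, by simp, by simp⟩
  | succ k ih =>
      have := inPow_mul ih hd
      rw [Nat.succ_mul, pow_succ]
      exact this

lemma inPow_split {S : Set M} {m n : ℕ} {g : M} (h : InPow S (m + n) g) :
    ∃ a b, InPow S m a ∧ InPow S n b ∧ g = a * b := by
  obtain ⟨l, hl, hS, hp⟩ := h
  refine ⟨(l.take m).prod, (l.drop m).prod, ⟨l.take m, by simp [hl], ?_, rfl⟩,
    ⟨l.drop m, by simp [hl], ?_, rfl⟩, ?_⟩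
  · intro x hx; exact hS x (List.mem_of_mem_take hx)
  · intro x hx; exact hS x (List.mem_of_mem_drop hx)
  · rw [← hp, ← List.prod_append, List.take_append_drop]

lemma periodic_mul {c : ℕ → M} {l : ℕ} (hc : ∀ k, c (k + l) = c k) :
    ∀ q i, c (q * l + i) = c i := by
  intro q
  induction q with
  | zero => simp
  | succ k ih =>
      intro i
      have h : (k + 1) * l + i = (k * l + i) + l := by ring
      rw [h, hc, ih]

lemma W_add (c : ℕ → M) (m n : ℕ) :
    ((List.range (m + n)).map c).reverse
      = ((List.range n).map (fun i => c (m + i))).reverse ++ ((List.range m).map c).reverse := by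
  rw [List.range_add, List.map_append, List.reverse_append, List.map_map]
  rfl

lemma W_pow_prod {c : ℕ → M} {l : ℕ} (hc : ∀ k, c (k + l) = c k) (q : ℕ) :
    (((List.range (q * l)).map c).reverse).prod
      = ((((List.range l).map c).reverse).prod) ^ q := by
  induction q with
  | zero => simp
  | succ k ih =>
      have h1 : (k + 1) * l = k * l + l := by ring
      have hmap : (List.range l).map (fun i => c (k * l + i)) = (List.range l).map c :=
        List.map_congr_left (fun i _ => periodic_mul hc k i)
      rw [h1, W_add, hmap, List.prod_append, ih, pow_succ']

lemma map_getD_range (l : List M) :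
    (List.range l.length).map (fun i => l.getD i 1) = l := by
  apply List.ext_getElem
  · simp
  · intro i h1 h2
    simp only [List.getElem_map, List.getElem_range]
    rw [List.getD_eq_getElem]

/-- **Lemma 5.9.** Let `M` be a cancellative monoid with no nontrivial invertible element,
generated by `S`, and let `w = s_ℓ ⋯ s₁` be a nonempty word over `S`. Then `M` admits a
right-`S`-ceiling that is periodic with period `w` if and only if the element `s_ℓ ⋯ s₁`
right-dominates `S^ℓ` in `M`. -/
theorem stmt_13 (S : Set M)
    (hlcancel : ∀ a b c : M, a * b = a * c → b = c)
    (hrcancel : ∀ a b c : M, a * c = b * c → a = b)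
    (hunits : ∀ a b : M, a * b = 1 → a = 1)
    (hgen : Submonoid.closure S = ⊤)
    (w : List M) (hw : ∀ x ∈ w, x ∈ S) (hne : w ≠ []) :
    (∃ c : ℕ → M, IsCeiling S c ∧ (∀ k : ℕ, c (k + w.length) = c k) ∧
        ((List.range w.length).map c).reverse = w) ↔
      (∀ n : ℕ, ∀ g : M, InPow S w.length g →
        g * w.prod ^ n ∣ w.prod ^ (n + 1)) := by
  have lpos : 0 < w.length := List.length_pos_iff.mpr hne
  constructor
  · rintro ⟨c, hceil, hper, hpre⟩ n g hg
    have hWn : ∀ q, (((List.range (q * w.length)).map c).reverse).prod = w.prod ^ q := by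
      intro q
      rw [W_pow_prod hper q, hpre]
    have hdelta : InPow S w.length w.prod := ⟨w, rfl, hw, rfl⟩
    have hgd : InPow S ((n + 1) * w.length) (g * w.prod ^ n) := by
      have h := inPow_mul hg (inPow_pow hdelta n)
      have he : (n + 1) * w.length = w.length + n * w.length := by ring
      rwa [he]
    have h2 := (hceil ((n + 1) * w.length)).2 (g * w.prod ^ n) (by simpa using hgd)
    rwa [hWn (n + 1)] at h2
  · intro hdom
    set l := w.length with hl
    set δ := w.prod with hδ
    -- key: products of q*l generators divide δ^q
    have dvd0 : ∀ q g, InPow S (q * l) g → g ∣ δ ^ q := by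
      intro q
      induction q with
      | zero =>
          intro g hg
          obtain ⟨lst, hlen, -, hp⟩ := hg
          have hnil : lst = [] := List.length_eq_zero_iff.mp (by simpa using hlen)
          subst hnil
          simp at hp
          simp [← hp]
      | succ k ih =>
          intro g hg
          have hg' : InPow S (l + k * l) g := by
            have he : (k + 1) * l = l + k * l := by ring
            rwa [he] at hg
          obtain ⟨a, b, ha, hb, rfl⟩ := inPow_split hg'
          obtain ⟨u, hu⟩ := ih b hb
          obtain ⟨t, ht⟩ := hdom k a ha
          refine ⟨u * t, ?_⟩
          rw [ht, hu]
          simp [mul_assoc]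
    -- the periodic candidate ceiling
    set c : ℕ → M := fun k => w.reverse.getD (k % l) 1 with hc
    have hper : ∀ k, c (k + l) = c k := by
      intro k
      simp [hc, Nat.add_mod_right]
    have hmaplt : ∀ m, m ≤ l → (List.range m).map c = (List.range m).map (fun i => w.reverse.getD i 1) := by
      intro m hm
      apply List.map_congr_left
      intro i hi
      rw [List.mem_range] at hi
      simp [hc, Nat.mod_eq_of_lt (lt_of_lt_of_le hi hm)]
    have hpre : ((List.range l).map c).reverse = w := by
      rw [List.reverse_eq_iff, hmaplt l le_rfl]
      have := map_getD_range w.reverse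
      rwa [List.length_reverse] at this
    -- suffix formula : for r ≤ l, the length-r prefix word is w.drop (l - r)
    have hsuf : ∀ r, r ≤ l → ((List.range r).map c).reverse = w.drop (l - r) := by
      intro r hr
      have hsplit : l = r + (l - r) := by omega
      have hW := W_add c r (l - r)
      rw [← hsplit, hpre] at hW
      have hlenA : (((List.range (l - r)).map (fun i => c (r + i))).reverse).length = l - r := by
        simp
      rw [hW]
      exact (List.drop_left' hlenA).symm
    -- now define the ceiling and verify
    refine ⟨c, ?_, hper, hpre⟩
    intro n
    constructor
    · intro x hx
      rw [List.mem_reverse, List.mem_map] at hx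
      obtain ⟨i, -, rfl⟩ := hx
      have hlt : i % l < w.reverse.length := by
        rw [List.length_reverse]
        exact Nat.mod_lt _ lpos
      rw [hc]
      simp only
      rw [List.getD_eq_getElem _ _ hlt]
      exact hw _ (List.mem_reverse.mp (List.getElem_mem hlt))
    · intro g hg
      simp only [List.length_reverse, List.length_map, List.length_range] at hg
      set q := n / l with hq
      set r := n % l with hr
      have hrlt : r < l := Nat.mod_lt _ lpos
      have hn : n = q * l + r := by
        rw [hq, hr, Nat.mul_comm]
        exact (Nat.div_add_mod n l).symm
      -- decompose the word
      have hW := W_add c (q * l) r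
      have hmap : (List.range r).map (fun i => c (q * l + i)) = (List.range r).map c := by
        apply List.map_congr_left
        intro i _
        exact periodic_mul hper q i
      rw [hmap, hsuf r hrlt.le] at hW
      have hprod : (((List.range n).map c).reverse).prod
          = (w.drop (l - r)).prod * δ ^ q := by
        rw [hn, hW, List.prod_append, W_pow_prod hper, hpre]
      rw [hprod]
      -- extend g on the left by the prefix of w of length l - r
      set u := w.take (l - r) with hu
      have huS : ∀ x ∈ u, x ∈ S := fun x hx => hw x (List.mem_of_mem_take hx)
      have hulen : u.length = l - r := by
        rw [hu, List.length_take]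
        omega
      have hug : InPow S ((q + 1) * l) (u.prod * g) := by
        have h := inPow_mul ⟨u, rfl, huS, rfl⟩ (by rwa [hn] at hg)
        have he : u.length + (q * l + r) = (q + 1) * l := by
          rw [hulen, Nat.succ_mul]
          omega
        rwa [he] at h
      obtain ⟨t, ht⟩ := dvd0 (q + 1) _ hug
      have hδsplit : δ = u.prod * (w.drop (l - r)).prod := by
        rw [hδ, hu, ← List.prod_append, List.take_append_drop]
      have key : u.prod * (g * t) = u.prod * ((w.drop (l - r)).prod * δ ^ q) := by
        have h1 : δ ^ (q + 1) = u.prod * ((w.drop (l - r)).prod * δ ^ q) := by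
          rw [pow_succ', hδsplit]
          rw [mul_assoc]
        rw [← h1, ht, mul_assoc]
      exact ⟨t, (hlcancel _ _ _ key).symm⟩
end Stmt13
end

section
/- Let M be a left-cancellative monoid generated by S and Δ ∈ M. Then Δ is right-quasi-central with s ≼ Δ for every s ∈ S if and only if s ≼ Δ ≼ sΔ holds for every s ∈ S. -/
/-- **Lemma 5.13.** Let `M` be a left-cancellative monoid generated by `S` and `Δ ∈ M`.
Then `Δ` is right-quasi-central (there is an endomorphism `φ` with `g Δ = Δ φ(g)` for all
`g`) and satisfies `s ≼ Δ` for every `s ∈ S`, if and only if `s ≼ Δ ≼ s Δ` holds for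
every `s ∈ S` (with `≼` left-divisibility). -/
theorem stmt_15 {M : Type*} [Monoid M] (S : Set M)
    (hcancel : ∀ a b c : M, a * b = a * c → b = c)
    (hgen : Submonoid.closure S = ⊤) (Δ : M) :
    ((∃ φ : M →* M, ∀ g : M, g * Δ = Δ * φ g) ∧ ∀ s ∈ S, s ∣ Δ) ↔
      ∀ s ∈ S, s ∣ Δ ∧ Δ ∣ s * Δ := by
  constructor
  · rintro ⟨⟨φ, hφ⟩, hdvd⟩ s hs
    exact ⟨hdvd s hs, ⟨φ s, hφ s⟩⟩
  · intro h
    refine ⟨?_, fun s hs => (h s hs).1⟩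
    have key : ∀ g : M, ∃! x : M, g * Δ = Δ * x := by
      intro g
      have hg : g ∈ Submonoid.closure S := by rw [hgen]; trivial
      have hex : ∃ x : M, g * Δ = Δ * x := by
        induction hg using Submonoid.closure_induction with
        | mem s hs => exact (h s hs).2
        | one => exact ⟨1, by simp⟩
        | mul a b _ _ ha hb =>
          obtain ⟨x, hx⟩ := ha
          obtain ⟨y, hy⟩ := hb
          exact ⟨x * y, by rw [mul_assoc, hy, ← mul_assoc, hx, mul_assoc]⟩
      obtain ⟨x, hx⟩ := hex
      exact ⟨x, hx, fun y hy => hcancel Δ y x (hy.symm.trans hx)⟩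
    choose f hf hu using key
    refine ⟨⟨⟨f, ?_⟩, ?_⟩, fun g => hf g⟩
    · exact (hu 1 1 (by simp)).symm
    · intro a b
      refine (hu (a * b) (f a * f b) ?_).symm
      rw [mul_assoc, hf b, ← mul_assoc, hf a, mul_assoc]
end

section
/- Let M be a cancellative monoid of right-O-type generated by S, and suppose s_ℓ⋯s₁ is a right-top S-word whose value Δ = [s_ℓ⋯s₁] is central in M. Then s_i = s₁ for every i, i.e., Δ = s₁^ℓ, and the infinite constant word …s₁s₁s₁ is the right-S-ceiling of M. -/
namespace Stmt16

variable {M : Type*} [Monoid M]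

def InPow (S : Set M) (n : ℕ) (g : M) : Prop :=
  ∃ l : List M, l.length = n ∧ (∀ x ∈ l, x ∈ S) ∧ l.prod = g

def RightTop (S : Set M) (w : List M) : Prop :=
  (∀ x ∈ w, x ∈ S) ∧ ∀ g : M, InPow S w.length g → g ∣ w.prod

def IsCeiling (S : Set M) (c : ℕ → M) : Prop :=
  ∀ n : ℕ, RightTop S (((List.range n).map c).reverse)

/-- **Lemma 5.14.** Let `M` be a cancellative monoid of right-`O`-type generated by `S`,
and let `w = s_ℓ ⋯ s₁` be a nonempty right-top `S`-word whose value `Δ = [w]` is central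
in `M`. Then all the letters `s_i` are equal to `s₁`, and the constant left-infinite word
`…s₁s₁s₁` is the right-`S`-ceiling of `M`. -/
theorem stmt_16 (S : Set M)
    (hlcancel : ∀ a b c : M, a * b = a * c → b = c)
    (hrcancel : ∀ a b c : M, a * c = b * c → a = b)
    (hunits : ∀ a b : M, a * b = 1 → a = 1)
    (hcomp : ∀ g h : M, g ∣ h ∨ h ∣ g)
    (hgen : Submonoid.closure S = ⊤)
    (w : List M) (hne : w ≠ []) (htop : RightTop S w)
    (hcentral : ∀ g : M, g * w.prod = w.prod * g) :
    ∃ a : M, w = List.replicate w.length a ∧ IsCeiling S (fun _ => a) := by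
  obtain ⟨hS, hdvd⟩ := htop
  set Δ := w.prod with hΔ
  have hw : w.dropLast ++ [w.getLast hne] = w := List.dropLast_append_getLast hne
  set a := w.getLast hne with ha
  have haS : a ∈ S := hS a (List.getLast_mem hne)
  -- divisibility antisymmetry
  have antisym : ∀ s t : M, s ∣ t → t ∣ s → s = t := by
    rintro s t ⟨x, rfl⟩ ⟨y, hy⟩
    have h1 : s * 1 = s * (x * y) := by rw [mul_one, ← mul_assoc, ← hy]
    have hxy : (1 : M) = x * y := hlcancel _ _ _ h1
    have hx : x = 1 := hunits _ _ hxy.symm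
    rw [hx, mul_one]
  -- Lemma A: last letter of any top word of the same length/value absorbs S
  have lemA : ∀ (u : List M) (s : M), (u ++ [s]).length = w.length →
      (∀ x ∈ u ++ [s], x ∈ S) → (u ++ [s]).prod = Δ → ∀ t ∈ S, t ∣ s := by
    intro u s hlen hmem hprod t ht
    have hg : InPow S w.length (u ++ [t]).prod := by
      refine ⟨u ++ [t], by simpa using hlen, ?_, rfl⟩
      intro x hx
      rcases List.mem_append.1 hx with hx | hx
      · exact hmem x (List.mem_append.2 (Or.inl hx))
      · simp only [List.mem_singleton] at hx; subst hx; exact ht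
    obtain ⟨x, hx⟩ := hdvd _ hg
    rw [← hprod] at hx
    simp only [List.prod_append, List.prod_singleton] at hx
    rw [mul_assoc] at hx
    exact ⟨x, hlcancel _ _ _ hx⟩
  -- every letter equals a
  have hall : ∀ s ∈ w, s = a := by
    intro s hs
    have hsS : s ∈ S := hS s hs
    have h1 : s ∣ a := by
      refine lemA w.dropLast a ?_ ?_ ?_ s hsS
      · rw [hw]
      · intro x hx; exact hS x (by rw [← hw]; exact hx)
      · rw [hw]
    obtain ⟨u, v, huv⟩ := List.append_of_mem hs
    have h2 : a ∣ s := by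
      refine lemA (v ++ u) s ?_ ?_ ?_ a haS
      · simp only [List.length_append, List.length_singleton]
        rw [huv]; simp; omega
      · intro x hx
        simp only [List.mem_append, List.mem_singleton] at hx
        rcases hx with (hx | hx) | hx
        · exact hS x (by rw [huv]; simp [hx])
        · exact hS x (by rw [huv]; simp [hx])
        · subst hx; exact hsS
      · have hΔeq : Δ = (u.prod * s) * v.prod := by
          rw [hΔ, huv]; simp [List.prod_append, mul_assoc]
        have hc : v.prod * Δ = Δ * v.prod := hcentral v.prod
        have hc2 : (v.prod * (u.prod * s)) * v.prod = ((u.prod * s) * v.prod) * v.prod := by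
          rw [mul_assoc, ← hΔeq, hc, hΔeq]
        have hc3 : v.prod * (u.prod * s) = (u.prod * s) * v.prod := hrcancel _ _ _ hc2
        simp only [List.prod_append, List.prod_singleton]
        rw [mul_assoc, hc3, ← hΔeq]
    exact antisym s a h1 h2
  have hrep : w = List.replicate w.length a := by
    exact List.eq_replicate_iff.2 ⟨rfl, hall⟩
  have hΔpow : Δ = a ^ w.length := by
    rw [hΔ]; conv_lhs => rw [hrep]
    rw [List.prod_replicate]
  -- key: S-words of length k*ℓ divide Δ^k
  have key : ∀ (k : ℕ) (l : List M), (∀ x ∈ l, x ∈ S) → l.length = k * w.length →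
      l.prod ∣ Δ ^ k := by
    intro k
    induction k with
    | zero =>
      intro l _ hlen
      have : l = [] := List.eq_nil_of_length_eq_zero (by simpa using hlen)
      simp [this]
    | succ k ih =>
      intro l hl hlen
      have hwpos : 0 < w.length := List.length_pos_iff.2 hne
      have hlen1 : (l.take w.length).length = w.length := by
        rw [List.length_take]
        have : w.length ≤ l.length := by rw [hlen]; nlinarith
        omega
      obtain ⟨q, hq⟩ := hdvd (l.take w.length).prod
        ⟨l.take w.length, hlen1, fun x hx => hl x (List.mem_of_mem_take hx), rfl⟩
      obtain ⟨r, hr⟩ := ih (l.drop w.length)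
        (fun x hx => hl x (List.mem_of_mem_drop hx))
        (by rw [List.length_drop, hlen]; ring_nf; omega)
      have hcq : q * Δ ^ k = Δ ^ k * q := ((Commute.symm (hcentral q)).pow_left k).symm
      refine ⟨r * q, ?_⟩
      have : Δ ^ (k + 1) = Δ * Δ ^ k := by rw [pow_succ, (Commute.refl Δ).pow_left k]
      calc Δ ^ (k + 1) = Δ * Δ ^ k := this
        _ = (l.take w.length).prod * q * Δ ^ k := by rw [← hq, hΔ]
        _ = (l.take w.length).prod * (Δ ^ k * q) := by rw [mul_assoc, hcq]
        _ = (l.take w.length).prod * ((l.drop w.length).prod * r * q) := by rw [← hr]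
        _ = l.prod * (r * q) := by
            conv_rhs => rw [← List.take_append_drop w.length l]
            rw [List.prod_append]; group
  -- the ceiling
  refine ⟨a, hrep, ?_⟩
  intro n
  have hrepn : ((List.range n).map (fun _ => a)).reverse = List.replicate n a := by
    simp [List.map_const']
  rw [hrepn]
  constructor
  · intro x hx
    rw [List.eq_of_mem_replicate hx]; exact haS
  · rintro g ⟨l, hlen, hl, rfl⟩
    simp only [List.length_replicate] at hlen
    have hwpos : 0 < w.length := List.length_pos_iff.2 hne
    have hle : n ≤ n * w.length := Nat.le_mul_of_pos_right n hwpos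
    set m := n * w.length - n with hm
    have hkey := key n (List.replicate m a ++ l) ?_ ?_
    · rw [hΔpow, ← pow_mul] at hkey
      obtain ⟨x, hx⟩ := hkey
      rw [List.prod_append, List.prod_replicate] at hx
      have hmn : w.length * n = m + n := by rw [hm, Nat.mul_comm]; omega
      rw [hmn, pow_add, mul_assoc] at hx
      have : a ^ n = l.prod * x := hlcancel _ _ _ hx
      rw [List.prod_replicate]
      exact ⟨x, this⟩
    · intro x hx
      rcases List.mem_append.1 hx with hx | hx
      · rw [List.eq_of_mem_replicate hx]; exact haS
      · exact hl x hx
    · simp [hlen, hm]; omega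

end Stmt16
end

section
/- For p, q ≥ 1, in the monoid M = ⟨a, b | a = b(aᵖb)^q⟩⁺ the element a^{p+1} is central, M is of O-type, and the associated group ⟨a, b | a = b(aᵖb)^q⟩ is isomorphic to the torus knot group ⟨x, y | x^{p+1} = y^{q+1}⟩ via x = a, y = aᵖb. -/
/-!
In the torus knot group `G = ⟨x, y | x^{p+1} = y^{q+1}⟩` the element `c = x^{p+1}` is central, and
van der Waerden's trick (letting `G` act on normal forms) shows that every element of `G` is
`w c^k` for exactly one `k ∈ ℤ` and one alternating word `w` in blocks `xᵉ` (`1 ≤ e ≤ p`) and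
`yᶠ` (`1 ≤ f ≤ q`). Call `k` plus the number of factors `xᵉ yᶠ` of `w` the height of `w c^k`.

The monoid maps to `G` by `a ↦ x`, `b ↦ x⁻ᵖ y = x y c⁻¹`, so `aᵖ b ↦ y` and `a^{p+1} ↦ c`.
Every element of the monoid is the canonical preimage of its image, and the normal forms of
nonnegative height are exactly the images of canonical preimages; so the monoid embeds into `G`
as the set `P` of elements of nonnegative height. Inverting `w c^k` reverses `w` and lowers the
exponent of `c` by the number of blocks, so the heights of `g` and `g⁻¹` add up to `-1` unless
`g` is a power of `c`. Hence `P ∪ P⁻¹ = G` and `P ∩ P⁻¹ = 1`, which give linear divisibility on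
both sides and trivial units; cancellativity is inherited from `G`.
-/

namespace Stmt17

/-- Two letters: `a = true`, `b = false`. -/
abbrev A : Bool := true
abbrev B : Bool := false

/-- The word `b (aᵖ b)^q`. -/
def rhs (p q : ℕ) : List Bool :=
  B :: (List.replicate q (List.replicate p A ++ [B])).flatten

/-- The single triangular relation `a = b (aᵖ b)^q`. -/
def R17 (p q : ℕ) : Set (List Bool × List Bool) := {([A], rhs p q)}

def posCon (R : Set (List Bool × List Bool)) : Con (FreeMonoid Bool) :=
  conGen (fun u v => (FreeMonoid.toList u, FreeMonoid.toList v) ∈ R)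

/-- The monoid `⟨a, b | a = b (aᵖ b)^q⟩⁺`. -/
def M17 (p q : ℕ) : Type := (posCon (R17 p q)).Quotient

instance (p q : ℕ) : Monoid (M17 p q) :=
  inferInstanceAs (Monoid (posCon (R17 p q)).Quotient)

def cls (p q : ℕ) (u : List Bool) : M17 p q :=
  ((FreeMonoid.ofList u : FreeMonoid Bool) : (posCon (R17 p q)).Quotient)

/-- The torus knot group `⟨x, y | x^{p+1} = y^{q+1}⟩`. -/
def TorusGroup (p q : ℕ) : Type :=
  PresentedGroup ({FreeGroup.of A ^ (p + 1) * (FreeGroup.of B ^ (q + 1))⁻¹} :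
    Set (FreeGroup Bool))

instance (p q : ℕ) : Group (TorusGroup p q) :=
  inferInstanceAs (Group (PresentedGroup _))

/-- The group `⟨a, b | a = b (aᵖ b)^q⟩`. -/
def MonGroup (p q : ℕ) : Type :=
  PresentedGroup ({FreeGroup.of A *
      (FreeGroup.of B * (FreeGroup.of A ^ p * FreeGroup.of B) ^ q)⁻¹} :
    Set (FreeGroup Bool))

instance (p q : ℕ) : Group (MonGroup p q) :=
  inferInstanceAs (Group (PresentedGroup _))

end Stmt17

theorem Function.Bijective.of_iterate_succ {α : Type*} {f : α → α} {n : ℕ}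
    (h : Function.Bijective f^[n + 1]) : Function.Bijective f :=
  ⟨(Function.iterate_succ f n ▸ h.1).of_comp, (Function.iterate_succ' f n ▸ h.2).of_comp⟩

section PositiveCone

variable {M G : Type*} [Monoid M] [Group G] {φ : M →* G}

theorem MonoidHom.eq_one_of_mul_eq_one (hφ : Function.Injective φ)
    (hS : ∀ g : G, g ∈ Set.range φ → g⁻¹ ∈ Set.range φ → g = 1) {a b : M} (h : a * b = 1) :
    a = 1 :=
  hφ <| (hS _ ⟨a, rfl⟩ ⟨b, eq_inv_of_mul_eq_one_right (by rw [← map_mul, h, map_one])⟩).trans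
    (map_one φ).symm

theorem MonoidHom.dvd_or_dvd (hφ : Function.Injective φ)
    (hS : ∀ g : G, g ∈ Set.range φ ∨ g⁻¹ ∈ Set.range φ) (a b : M) : a ∣ b ∨ b ∣ a := by
  rcases hS ((φ a)⁻¹ * φ b) with ⟨c, hc⟩ | ⟨c, hc⟩
  · exact Or.inl ⟨c, hφ (by rw [map_mul, hc, mul_inv_cancel_left])⟩
  · exact Or.inr ⟨c, hφ (by rw [map_mul, hc, mul_inv_rev, inv_inv, mul_inv_cancel_left])⟩

theorem MonoidHom.exists_mul_eq_or (hφ : Function.Injective φ)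
    (hS : ∀ g : G, g ∈ Set.range φ ∨ g⁻¹ ∈ Set.range φ) (a b : M) :
    (∃ c, b = c * a) ∨ (∃ c, a = c * b) := by
  rcases hS (φ b * (φ a)⁻¹) with ⟨c, hc⟩ | ⟨c, hc⟩
  · exact Or.inl ⟨c, hφ (by rw [map_mul, hc, inv_mul_cancel_right])⟩
  · exact Or.inr ⟨c, hφ (by rw [map_mul, hc, mul_inv_rev, inv_inv, inv_mul_cancel_right])⟩

end PositiveCone

namespace Stmt17

def maxExp (p q : ℕ) : Bool → ℕ
  | true => p
  | false => q

theorem maxExp_pos {p q : ℕ} [NeZero p] [NeZero q] (α : Bool) : 0 < maxExp p q α := by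
  cases α <;> simp [maxExp, Nat.pos_iff_ne_zero, NeZero.ne]

namespace TorusGroup

variable {p q : ℕ}

def gen (α : Bool) : TorusGroup p q := PresentedGroup.of α

def c : TorusGroup p q := gen A ^ (p + 1)

theorem gen_pow_maxExp_succ (α : Bool) : (gen α : TorusGroup p q) ^ (maxExp p q α + 1) = c := by
  cases α
  · have := PresentedGroup.one_of_mem (rels := ({FreeGroup.of A ^ (p + 1) *
      (FreeGroup.of B ^ (q + 1))⁻¹} : Set (FreeGroup Bool))) rfl
    simp only [map_mul, map_inv, map_pow] at this
    exact (mul_inv_eq_one.mp this).symm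
  · rfl

theorem gen_B_pow_succ : (gen B : TorusGroup p q) ^ (q + 1) = c :=
  gen_pow_maxExp_succ false

theorem commute_c (g : TorusGroup p q) : Commute g c := by
  have hgen (α : Bool) : gen α ∈ Subgroup.centralizer {(c : TorusGroup p q)} := by
    rw [Subgroup.mem_centralizer_singleton_iff, ← gen_pow_maxExp_succ α]
    exact (Commute.self_pow (gen α) _).eq
  exact Subgroup.mem_centralizer_singleton_iff.mp (PresentedGroup.generated_by _ _ hgen g)

def b : TorusGroup p q := (gen A ^ p)⁻¹ * gen B

theorem gen_A_pow_mul_b : (gen A : TorusGroup p q) ^ p * b = gen B :=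
  mul_inv_cancel_left _ _

theorem gen_A_eq : (gen A : TorusGroup p q) = b * (gen A ^ p * b) ^ q := by
  rw [gen_A_pow_mul_b, b, mul_assoc, ← pow_succ', gen_B_pow_succ, c, pow_succ,
    inv_mul_cancel_left]

end TorusGroup

abbrev Block := Bool × ℕ

def consPow (α : Bool) (e : ℕ) (w : List Block) : List Block :=
  if e = 0 then w else (α, e) :: w

def IsNormal (p q : ℕ) (w : List Block) : Prop :=
  (∀ b ∈ w, 1 ≤ b.2 ∧ b.2 ≤ maxExp p q b.1) ∧ w.IsChain (fun b b' => b.1 ≠ b'.1)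

def mulGen (p q : ℕ) (α : Bool) : ℤ × List Block → ℤ × List Block
  | (k, (β, e) :: t) =>
    if β = α then if e < maxExp p q α then (k, (α, e + 1) :: t) else (k + 1, t)
    else (k, (α, 1) :: (β, e) :: t)
  | (k, []) => (k, [(α, 1)])

section MulGen

variable {p q : ℕ} {α : Bool} {e : ℕ} {t w : List Block}

theorem IsNormal.tail {b : Block} (h : IsNormal p q (b :: w)) : IsNormal p q w :=
  ⟨fun x hx => h.1 x (List.mem_cons_of_mem _ hx), h.2.tail⟩

theorem isNormal_consPow (he : e ≤ maxExp p q α) (ht : ∀ b ∈ t.head?, α ≠ b.1)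
    (hn : IsNormal p q t) : IsNormal p q (consPow α e t) := by
  unfold Stmt17.consPow
  split_ifs with h0
  · exact hn
  · refine ⟨?_, List.isChain_cons.mpr ⟨ht, hn.2⟩⟩
    simp only [List.mem_cons, forall_eq_or_imp]
    exact ⟨⟨by omega, he⟩, hn.1⟩

theorem IsNormal.exists_consPow (hw : IsNormal p q w) (α : Bool) :
    ∃ e t, e ≤ maxExp p q α ∧ (∀ b ∈ t.head?, α ≠ b.1) ∧ IsNormal p q t ∧
      w = consPow α e t := by
  match w, hw with
  | [], hw => exact ⟨0, [], Nat.zero_le _, by simp, hw, rfl⟩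
  | (β, e) :: t, hw =>
    have he := hw.1 _ List.mem_cons_self
    by_cases hβ : β = α
    · subst hβ
      exact ⟨e, t, he.2, (List.isChain_cons.mp hw.2).1, hw.tail,
        by simp [consPow, show e ≠ 0 by omega]⟩
    · exact ⟨0, (β, e) :: t, Nat.zero_le _, by simpa using Ne.symm hβ, hw, rfl⟩

theorem mulGen_consPow_of_lt (ht : ∀ b ∈ t.head?, α ≠ b.1) (k : ℤ) (he : e < maxExp p q α) :
    mulGen p q α (k, consPow α e t) = (k, consPow α (e + 1) t) := by
  rcases Nat.eq_zero_or_pos e with rfl | he0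
  · match t, ht with
    | [], _ => rfl
    | (β, f) :: t, ht =>
      simp only [List.head?_cons, Option.mem_def, Option.some.injEq, forall_eq'] at ht
      simp [mulGen, consPow, Ne.symm ht]
  · simp [mulGen, consPow, he, he0.ne']

theorem mulGen_consPow_maxExp [NeZero p] [NeZero q] (k : ℤ) :
    mulGen p q α (k, consPow α (maxExp p q α) t) = (k + 1, t) := by
  simp [mulGen, consPow, (maxExp_pos (p := p) (q := q) α).ne']

theorem mulGen_iterate_consPow (ht : ∀ b ∈ t.head?, α ≠ b.1) (k : ℤ) {j : ℕ}
    (h : e + j ≤ maxExp p q α) :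
    (mulGen p q α)^[j] (k, consPow α e t) = (k, consPow α (e + j) t) := by
  induction j generalizing e with
  | zero => rfl
  | succ j ih =>
    rw [Function.iterate_succ_apply, mulGen_consPow_of_lt ht k (by omega), ih (by omega),
      show e + 1 + j = e + (j + 1) by omega]

theorem mulGen_iterate_maxExp_succ [NeZero p] [NeZero q] (hw : IsNormal p q w) (k : ℤ) :
    (mulGen p q α)^[maxExp p q α + 1] (k, w) = (k + 1, w) := by
  obtain ⟨e, t, he, ht, -, rfl⟩ := hw.exists_consPow α
  have hfill := mulGen_iterate_consPow ht k (j := maxExp p q α - e) (Nat.add_sub_cancel' he).le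
  have hrefill := mulGen_iterate_consPow (p := p) (q := q) ht (k + 1) (e := 0) (j := e) (by omega)
  rw [show maxExp p q α + 1 = e + (1 + (maxExp p q α - e)) by omega, Function.iterate_add_apply,
    Function.iterate_add_apply, hfill, Nat.add_sub_cancel' he, Function.iterate_one,
    mulGen_consPow_maxExp]
  simpa [consPow] using hrefill

theorem IsNormal.mulGen [NeZero p] [NeZero q] (hw : IsNormal p q w) (α : Bool) (k : ℤ) :
    IsNormal p q (mulGen p q α (k, w)).2 := by
  obtain ⟨e, t, he, ht, htn, rfl⟩ := hw.exists_consPow α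
  rcases he.lt_or_eq with he | rfl
  · rw [mulGen_consPow_of_lt ht k he]
    exact isNormal_consPow he ht htn
  · rw [mulGen_consPow_maxExp]
    exact htn

theorem mulGen_add (α : Bool) (k j : ℤ) (w : List Block) :
    mulGen p q α (k + j, w) = ((mulGen p q α (k, w)).1 + j, (mulGen p q α (k, w)).2) := by
  match w with
  | [] => rfl
  | (β, e) :: t =>
    simp only [mulGen]
    split_ifs <;> simp only [Prod.mk.injEq, and_true]
    ring

end MulGen

def NormalForm (p q : ℕ) : Type := {n : ℤ × List Block // IsNormal p q n.2}

namespace NormalForm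

variable {p q : ℕ}

def one : NormalForm p q := ⟨(0, []), by simp [IsNormal]⟩

def mulGen [NeZero p] [NeZero q] (α : Bool) (n : NormalForm p q) : NormalForm p q :=
  ⟨Stmt17.mulGen p q α n.1, n.2.mulGen α n.1.1⟩

theorem val_mulGen_iterate [NeZero p] [NeZero q] (α : Bool) (j : ℕ) (n : NormalForm p q) :
    ((mulGen α)^[j] n).1 = (Stmt17.mulGen p q α)^[j] n.1 :=
  Function.Semiconj.iterate_right (f := Subtype.val) (fun _ => rfl) j n

def shift : Equiv.Perm (NormalForm p q) where
  toFun n := ⟨(n.1.1 + 1, n.1.2), n.2⟩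
  invFun n := ⟨(n.1.1 - 1, n.1.2), n.2⟩
  left_inv n := Subtype.ext (by simp)
  right_inv n := Subtype.ext (by simp)

theorem val_shift (n : NormalForm p q) : (shift n).1 = (n.1.1 + 1, n.1.2) := rfl

theorem val_shift_inv (n : NormalForm p q) : (shift⁻¹ n).1 = (n.1.1 - 1, n.1.2) := rfl

theorem mulGen_iterate_eq_shift [NeZero p] [NeZero q] (α : Bool) :
    (mulGen α)^[maxExp p q α + 1] = (shift : NormalForm p q → NormalForm p q) := by
  funext n
  apply Subtype.ext
  rw [val_mulGen_iterate]
  exact mulGen_iterate_maxExp_succ n.2 n.1.1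

noncomputable def mulGenPerm [NeZero p] [NeZero q] (α : Bool) : Equiv.Perm (NormalForm p q) :=
  Equiv.ofBijective (mulGen α) (Function.Bijective.of_iterate_succ
    (by rw [mulGen_iterate_eq_shift]; exact shift.bijective))

theorem coe_mulGenPerm [NeZero p] [NeZero q] (α : Bool) :
    ⇑(mulGenPerm α : Equiv.Perm (NormalForm p q)) = mulGen α := rfl

theorem mulGenPerm_pow_maxExp_succ [NeZero p] [NeZero q] (α : Bool) :
    mulGenPerm α ^ (maxExp p q α + 1) = (shift : Equiv.Perm (NormalForm p q)) :=
  Equiv.ext (congrFun (mulGen_iterate_eq_shift α))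

end NormalForm

namespace TorusGroup

variable {p q : ℕ}

def evalWord (w : List Block) : TorusGroup p q := (w.map fun b => gen b.1 ^ b.2).prod

def eval (n : ℤ × List Block) : TorusGroup p q := evalWord n.2 * c ^ n.1

theorem evalWord_nil : (evalWord [] : TorusGroup p q) = 1 := rfl

theorem evalWord_cons (b : Block) (t : List Block) :
    (evalWord (b :: t) : TorusGroup p q) = gen b.1 ^ b.2 * evalWord t := by
  simp [evalWord]

theorem evalWord_append (w w' : List Block) :
    (evalWord (w ++ w') : TorusGroup p q) = evalWord w * evalWord w' := by
  simp [evalWord]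

theorem evalWord_consPow (α : Bool) (e : ℕ) (t : List Block) :
    (evalWord (consPow α e t) : TorusGroup p q) = gen α ^ e * evalWord t := by
  unfold consPow
  split_ifs with h <;> simp [evalWord, h]

theorem eval_cons (k : ℤ) (b : Block) (t : List Block) :
    (eval (k, b :: t) : TorusGroup p q) = gen b.1 ^ b.2 * eval (k, t) := by
  rw [eval, evalWord_cons, mul_assoc, eval]

theorem eval_succ (k : ℤ) (w : List Block) :
    (eval (k + 1, w) : TorusGroup p q) = c * eval (k, w) := by
  rw [eval, eval, zpow_add_one, ← mul_assoc, (commute_c _).eq.symm]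

theorem eval_mulGen [NeZero p] [NeZero q] {w : List Block} (hw : IsNormal p q w) (α : Bool)
    (k : ℤ) : (eval (mulGen p q α (k, w)) : TorusGroup p q) = gen α * eval (k, w) := by
  obtain ⟨e, t, he, ht, -, rfl⟩ := hw.exists_consPow α
  rcases he.lt_or_eq with he | rfl
  · simp only [eval, mulGen_consPow_of_lt ht k he, evalWord_consPow, pow_succ', mul_assoc]
  · simp only [eval, mulGen_consPow_maxExp, evalWord_consPow, ← mul_assoc, ← pow_succ',
      gen_pow_maxExp_succ, zpow_add_one, (commute_c _).eq]

noncomputable def action [NeZero p] [NeZero q] : TorusGroup p q →* Equiv.Perm (NormalForm p q) :=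
  PresentedGroup.toGroup (f := NormalForm.mulGenPerm) <| by
    rintro r rfl
    simp only [map_mul, map_inv, map_pow, FreeGroup.lift_apply_of]
    exact mul_inv_eq_one.mpr ((NormalForm.mulGenPerm_pow_maxExp_succ true).trans
      (NormalForm.mulGenPerm_pow_maxExp_succ false).symm)

theorem action_gen [NeZero p] [NeZero q] (α : Bool) :
    action (gen α : TorusGroup p q) = NormalForm.mulGenPerm α :=
  PresentedGroup.toGroup.of _

theorem val_action_c_zpow [NeZero p] [NeZero q] (k : ℤ) (n : NormalForm p q) :
    (action (c ^ k) n).1 = (n.1.1 + k, n.1.2) := by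
  have hc : action (c : TorusGroup p q) = NormalForm.shift := by
    rw [c, map_pow, action_gen]
    exact NormalForm.mulGenPerm_pow_maxExp_succ true
  rw [map_zpow, hc]
  induction k using Int.induction_on generalizing n with
  | zero => simp
  | succ i ih =>
    rw [zpow_add_one, Equiv.Perm.mul_apply, ih, NormalForm.val_shift]
    exact Prod.ext (by dsimp only; ring) rfl
  | pred i ih =>
    rw [zpow_sub_one, Equiv.Perm.mul_apply, ih, NormalForm.val_shift_inv]
    exact Prod.ext (by dsimp only; ring) rfl

theorem val_action_eval_one [NeZero p] [NeZero q] {w : List Block} (hw : IsNormal p q w)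
    (k : ℤ) : (action (eval (k, w) : TorusGroup p q) NormalForm.one).1 = (k, w) := by
  induction w with
  | nil =>
    rw [show (eval (k, []) : TorusGroup p q) = c ^ k by simp [eval, evalWord], val_action_c_zpow]
    simp [NormalForm.one]
  | cons b t ih =>
    obtain ⟨α, e⟩ := b
    have he := hw.1 _ List.mem_cons_self
    have ht := (List.isChain_cons.mp hw.2).1
    rw [eval_cons, map_mul, Equiv.Perm.mul_apply, map_pow, action_gen, Equiv.Perm.coe_pow,
      NormalForm.coe_mulGenPerm, NormalForm.val_mulGen_iterate, ih hw.tail]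
    simpa [consPow, show e ≠ 0 by omega] using
      mulGen_iterate_consPow (p := p) (q := q) ht k (e := 0) (j := e) (by simpa using he.2)

theorem eval_action [NeZero p] [NeZero q] (g : TorusGroup p q) (n : NormalForm p q) :
    eval (action g n).1 = g * eval n.1 := by
  let H : Subgroup (TorusGroup p q) :=
    { carrier := {g | ∀ n : NormalForm p q, eval (action g n).1 = g * eval n.1}
      one_mem' := by simp
      mul_mem' := fun {g h} hg hh n => by
        rw [map_mul, Equiv.Perm.mul_apply, hg (action h n), hh n, mul_assoc]
      inv_mem' := fun {g} hg n => by
        have := hg (action g⁻¹ n)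
        rw [← Equiv.Perm.mul_apply, ← map_mul, mul_inv_cancel, map_one,
          Equiv.Perm.one_apply] at this
        rw [this, inv_mul_cancel_left] }
  exact PresentedGroup.generated_by _ H (fun α n => eval_mulGen n.2 α n.1.1) g n

noncomputable def normalFormEquiv [NeZero p] [NeZero q] : NormalForm p q ≃ TorusGroup p q where
  toFun n := eval n.1
  invFun g := action g NormalForm.one
  left_inv n := Subtype.ext (val_action_eval_one n.2 n.1.1)
  right_inv g := by
    simp only [eval_action]
    simp [NormalForm.one, eval, evalWord]

end TorusGroup

def invBlocks (p q : ℕ) (w : List Block) : List Block :=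
  (w.map fun b => (b.1, maxExp p q b.1 + 1 - b.2)).reverse

def invNF (p q : ℕ) (n : ℤ × List Block) : ℤ × List Block :=
  (-n.1 - n.2.length, invBlocks p q n.2)

def countAdj (α β : Bool) : List Block → ℕ
  | b :: b' :: t => countAdj α β (b' :: t) + if b.1 = α ∧ b'.1 = β then 1 else 0
  | _ => 0

def height (n : ℤ × List Block) : ℤ := n.1 + countAdj true false n.2

def IsPos (p q : ℕ) (n : ℤ × List Block) : Prop := IsNormal p q n.2 ∧ 0 ≤ height n

section Inverse

variable {p q : ℕ} {w : List Block}

theorem IsNormal.invBlocks (hw : IsNormal p q w) : IsNormal p q (invBlocks p q w) := by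
  refine ⟨?_, ?_⟩
  · simp only [Stmt17.invBlocks, List.mem_reverse, List.mem_map]
    rintro _ ⟨b, hb, rfl⟩
    have := hw.1 b hb
    dsimp only
    omega
  · rw [Stmt17.invBlocks, List.isChain_reverse, List.isChain_map]
    exact hw.2.imp fun _ _ h => Ne.symm h

theorem TorusGroup.evalWord_invBlocks (hw : IsNormal p q w) :
    (TorusGroup.evalWord (invBlocks p q w) : TorusGroup p q) =
      (TorusGroup.evalWord w)⁻¹ * TorusGroup.c ^ w.length := by
  induction w with
  | nil => simp [Stmt17.invBlocks, evalWord]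
  | cons b t ih =>
    have hb : (gen b.1 : TorusGroup p q) ^ (maxExp p q b.1 + 1 - b.2) = (gen b.1 ^ b.2)⁻¹ * c := by
      have he := (hw.1 b List.mem_cons_self).2
      rw [eq_inv_mul_iff_mul_eq, ← pow_add, Nat.add_sub_cancel' (by omega), gen_pow_maxExp_succ]
    have hcomm := ((commute_c (gen b.1 ^ b.2 : TorusGroup p q)).inv_left.pow_right t.length).eq
    have hcons : invBlocks p q (b :: t) = invBlocks p q t ++ [(b.1, maxExp p q b.1 + 1 - b.2)] := by
      simp [Stmt17.invBlocks]
    rw [hcons, evalWord_append, ih hw.tail, evalWord_cons, evalWord_cons, evalWord_nil, mul_one, hb,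
      mul_inv_rev, List.length_cons, pow_succ, mul_assoc, ← mul_assoc (c ^ t.length), ← hcomm]
    simp only [mul_assoc]

theorem TorusGroup.eval_invNF {n : ℤ × List Block} (hw : IsNormal p q n.2) :
    (TorusGroup.eval (invNF p q n) : TorusGroup p q) = (TorusGroup.eval n)⁻¹ := by
  obtain ⟨k, w⟩ := n
  simp only [eval, invNF, evalWord_invBlocks hw, mul_inv_rev, mul_assoc, ← zpow_natCast,
    ← zpow_add, add_sub_cancel, ← zpow_neg]
  exact ((commute_c _).inv_left.zpow_right _).eq

end Inverse

section Height

variable {p q : ℕ} {t w : List Block}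

theorem countAdj_cons (α β : Bool) (x : Block) (t : List Block) :
    countAdj α β (x :: t) =
      countAdj α β t + if x.1 = α ∧ t.head?.map Prod.fst = some β then 1 else 0 := by
  cases t <;> simp [countAdj]

theorem countAdj_cons_of_ne {α : Bool} {e : ℕ}
    (hne : ∀ f t', t = (false, f) :: t' → α = true → False) :
    countAdj true false ((α, e) :: t) = countAdj true false t := by
  rcases t with _ | ⟨⟨β, f⟩, t⟩
  · rfl
  · cases β
    · simpa [countAdj_cons] using hne f t rfl
    · simp [countAdj_cons]

theorem countAdj_consPow_false (f : ℕ) (t : List Block) :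
    countAdj true false (consPow false f t) = countAdj true false t := by
  unfold consPow
  split_ifs <;> simp [countAdj_cons]

theorem countAdj_consPow_true_le_succ (e : ℕ) (t : List Block) :
    countAdj true false (consPow true e t) ≤ countAdj true false (consPow true (e + 1) t) := by
  rcases Nat.eq_zero_or_pos e with rfl | he
  · simp [consPow, countAdj_cons]
  · simp [consPow, he.ne', countAdj_cons]

theorem countAdj_consPow_le (α : Bool) (e : ℕ) (t : List Block) :
    countAdj true false (consPow α e t) ≤ countAdj true false t + 1 := by
  unfold consPow
  split_ifs
  · omega
  · rw [countAdj_cons]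
    split_ifs <;> omega

theorem countAdj_append_singleton (α β : Bool) (l : List Block) (b : Block) :
    countAdj α β (l ++ [b]) =
      countAdj α β l + if l.getLast?.map Prod.fst = some α ∧ b.1 = β then 1 else 0 := by
  induction l with
  | nil => simp [countAdj]
  | cons x l ih =>
    cases l with
    | nil => simp [countAdj]
    | cons y t =>
      simp only [List.cons_append, countAdj, List.getLast?_cons_cons] at ih ⊢
      rw [ih]
      omega

theorem countAdj_reverse (α β : Bool) (l : List Block) :
    countAdj α β l.reverse = countAdj β α l := by
  induction l with
  | nil => rfl
  | cons x l ih =>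
    rw [List.reverse_cons, countAdj_append_singleton, ih, List.getLast?_reverse]
    cases l with
    | nil => simp [countAdj]
    | cons y t => simp [countAdj, and_comm]

theorem countAdj_map (α β : Bool) (f : Block → ℕ) (l : List Block) :
    countAdj α β (l.map fun b => (b.1, f b)) = countAdj α β l := by
  induction l with
  | nil => rfl
  | cons x l ih =>
    cases l with
    | nil => rfl
    | cons y t => simp only [List.map_cons, countAdj] at ih ⊢; rw [ih]

theorem countAdj_add_countAdj (hw : w.IsChain fun b b' => b.1 ≠ b'.1) (hne : w ≠ []) :
    countAdj true false w + countAdj false true w + 1 = w.length := by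
  induction w with
  | nil => exact absurd rfl hne
  | cons x l ih =>
    cases l with
    | nil => rfl
    | cons y t =>
      obtain ⟨hxy, ht⟩ := List.isChain_cons_cons.mp hw
      have := ih ht (List.cons_ne_nil _ _)
      obtain ⟨α, e⟩ := x
      obtain ⟨β, f⟩ := y
      cases α <;> cases β <;> simp_all [countAdj] <;> omega

theorem height_add_height_invNF (hw : IsNormal p q w) (hne : w ≠ []) (k : ℤ) :
    height (k, w) + height (invNF p q (k, w)) = -1 := by
  have h := countAdj_add_countAdj hw.2 hne
  simp only [height, invNF, invBlocks, countAdj_reverse, countAdj_map]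
  omega

theorem IsNormal.isPos_or_isPos_invNF {n : ℤ × List Block} (hn : IsNormal p q n.2) :
    IsPos p q n ∨ IsPos p q (invNF p q n) := by
  obtain ⟨k, w⟩ := n
  dsimp only at hn
  by_cases hne : w = []
  · subst hne
    simp [IsPos, height, invNF, invBlocks, countAdj, hn]
    omega
  · have := height_add_height_invNF hn hne k
    by_cases h : 0 ≤ height (k, w)
    · exact Or.inl ⟨hn, h⟩
    · exact Or.inr ⟨hn.invBlocks, by omega⟩

theorem IsPos.eq_of_isPos_invNF {n : ℤ × List Block} (h : IsPos p q n)
    (h' : IsPos p q (invNF p q n)) : n = (0, []) := by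
  obtain ⟨k, w⟩ := n
  obtain ⟨hw, h⟩ := h
  obtain ⟨-, h'⟩ := h'
  dsimp only at hw
  by_cases hne : w = []
  · subst hne
    simp [height, invNF, invBlocks, countAdj] at h h' ⊢
    omega
  · have := height_add_height_invNF hw hne k
    omega

theorem isPos_of_nonneg {k : ℤ} (hw : IsNormal p q w) (hk : 0 ≤ k) : IsPos p q (k, w) :=
  ⟨hw, by simp only [height]; omega⟩

theorem IsPos.of_cons_false {k : ℤ} {f : ℕ} (h : IsPos p q (k, (false, f) :: w)) :
    IsPos p q (k, w) :=
  ⟨h.1.tail, by simpa [height, countAdj_cons] using h.2⟩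

theorem IsPos.of_cons_cons {k : ℤ} {e f : ℕ} (h : IsPos p q (k, (true, e) :: (false, f) :: w)) :
    IsPos p q (k + 1, w) :=
  ⟨h.1.tail.tail, by have := h.2; simp [height, countAdj_cons] at this ⊢; omega⟩

theorem IsPos.of_cons_of_ne {k : ℤ} {α : Bool} {e : ℕ}
    (hne : ∀ f t', w = (false, f) :: t' → α = true → False) (h : IsPos p q (k, (α, e) :: w)) :
    IsPos p q (k, w) :=
  ⟨h.1.tail, by simpa [height, countAdj_cons_of_ne hne] using h.2⟩

end Height

/-- Models left multiplication by `x⁻ᵖ y = x y c⁻¹`, the image of `b`. -/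
def mulB (p q : ℕ) (n : ℤ × List Block) : ℤ × List Block :=
  ((mulGen p q true (mulGen p q false n)).1 - 1, (mulGen p q true (mulGen p q false n)).2)

section MulB

variable {p q : ℕ} {f : ℕ} {t : List Block} {n : ℤ × List Block}

theorem mulB_consPow_of_lt (ht : ∀ b ∈ t.head?, false ≠ b.1) (k : ℤ) (hf : f < q) :
    mulB p q (k, consPow false f t) = (k - 1, (true, 1) :: (false, f + 1) :: t) := by
  rw [mulB, mulGen_consPow_of_lt ht k (show f < maxExp p q false from hf)]
  simp [consPow, mulGen]

theorem mulB_cons_false_q (k : ℤ) (t : List Block) :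
    mulB p q (k, (false, q) :: t) = mulGen p q true (k, t) := by
  have h : mulGen p q false (k, (false, q) :: t) = (k + 1, t) := by simp [mulGen, maxExp]
  rw [mulB, h, mulGen_add]
  simp

theorem IsPos.mulGen_true [NeZero p] [NeZero q] (h : IsPos p q n) :
    IsPos p q (mulGen p q true n) := by
  obtain ⟨k, w⟩ := n
  refine ⟨h.1.mulGen true k, ?_⟩
  obtain ⟨e, t, he, ht, -, rfl⟩ := h.1.exists_consPow true
  have h2 := h.2
  rcases he.lt_or_eq with he | he
  · rw [mulGen_consPow_of_lt ht k he]
    have := countAdj_consPow_true_le_succ e t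
    simp only [height] at h2 ⊢
    omega
  · rw [he, mulGen_consPow_maxExp]
    have := countAdj_consPow_le true (maxExp p q true) t
    simp only [height, he] at h2 ⊢
    omega

theorem IsPos.mulB [NeZero p] [NeZero q] (h : IsPos p q n) : IsPos p q (mulB p q n) := by
  obtain ⟨k, w⟩ := n
  obtain ⟨f, t, hf, ht, htn, rfl⟩ := h.1.exists_consPow false
  have htpos : IsPos p q (k, t) := ⟨htn, by simpa [height, countAdj_consPow_false] using h.2⟩
  rcases hf.lt_or_eq with hf | hf
  · refine ⟨((h.1.mulGen false k).mulGen true _), ?_⟩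
    rw [mulB_consPow_of_lt ht k (show f < q from hf)]
    have := htpos.2
    simp [height, countAdj_cons] at this ⊢
    omega
  · rw [hf, show consPow false (maxExp p q false) t = (false, q) :: t by
      simp [consPow, maxExp, NeZero.ne], mulB_cons_false_q]
    exact htpos.mulGen_true

end MulB

namespace M17

variable {p q : ℕ} {k : ℤ} {e f : ℕ} {t : List Block} {n : ℤ × List Block}

def a : M17 p q := cls p q [A]

def b : M17 p q := cls p q [B]

def y : M17 p q := a ^ p * b

def gen : Bool → M17 p q
  | true => a
  | false => y

theorem cls_append (u v : List Bool) : cls p q (u ++ v) = cls p q u * cls p q v := rfl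

theorem cls_eq_prod (u : List Bool) : cls p q u = (u.map fun α => cls p q [α]).prod := by
  induction u with
  | nil => rfl
  | cons α u ih => rw [List.map_cons, List.prod_cons, ← ih, ← cls_append]; rfl

theorem a_eq : (a : M17 p q) = b * y ^ q := by
  have h : cls p q [A] = cls p q (rhs p q) :=
    (Con.eq _).mpr (ConGen.Rel.of _ _ (by simp [R17]))
  rw [a, h, cls_eq_prod]
  simp [rhs, List.map_flatten, List.prod_flatten, List.map_replicate, List.prod_replicate, y, a, b]

theorem a_pow_succ : (a : M17 p q) ^ (p + 1) = y ^ (q + 1) :=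
  calc a ^ (p + 1) = a ^ p * (b * y ^ q) := by rw [pow_succ, ← a_eq]
    _ = y ^ (q + 1) := by rw [pow_succ', ← mul_assoc, y]

theorem a_mul_y : (a : M17 p q) * y = b * a ^ (p + 1) := by
  rw [a_pow_succ, pow_succ, ← mul_assoc, ← a_eq]

theorem induction_on {P : M17 p q → Prop} (g : M17 p q) (one : P 1)
    (a_mul : ∀ g, P g → P (a * g)) (b_mul : ∀ g, P g → P (b * g)) : P g := by
  induction g using Con.induction_on with
  | H u =>
    induction u using FreeMonoid.inductionOn' with
    | one => exact one
    | of_mul α u ih =>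
      rw [Con.coe_mul]
      cases α
      · exact b_mul _ ih
      · exact a_mul _ ih

theorem commute_a_pow (g : M17 p q) : Commute g (a ^ (p + 1)) := by
  induction g using induction_on with
  | one => exact Commute.one_left _
  | a_mul g h => exact (Commute.self_pow a _).mul_left h
  | b_mul g h =>
    refine Commute.mul_left ?_ h
    show b * a ^ (p + 1) = a ^ (p + 1) * b
    rw [← a_mul_y, y, ← mul_assoc, ← pow_succ']

theorem a_pow_mul_y_pow (he : 1 ≤ e) (hf : 1 ≤ f) :
    (a : M17 p q) ^ e * y ^ f = a ^ (p + 1) * (a ^ (e - 1) * b * y ^ (f - 1)) := by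
  obtain ⟨e, rfl⟩ := Nat.exists_eq_add_of_le' he
  obtain ⟨f, rfl⟩ := Nat.exists_eq_add_of_le' hf
  simp only [Nat.add_sub_cancel]
  rw [pow_succ, pow_succ', mul_assoc, ← mul_assoc a, a_mul_y, (commute_a_pow b).eq]
  simp only [mul_assoc]
  exact (commute_a_pow _).left_comm _

theorem a_mul_y_pow (hf : 1 ≤ f) : (a : M17 p q) * y ^ f = a ^ (p + 1) * (b * y ^ (f - 1)) := by
  simpa using a_pow_mul_y_pow (p := p) (q := q) le_rfl hf

noncomputable def toTorus : M17 p q →* TorusGroup p q :=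
  Con.lift _ (FreeMonoid.lift fun α => bif α then TorusGroup.gen A else TorusGroup.b) <|
    Con.conGen_le.mpr <| by
  rintro u v h
  simp only [R17, Set.mem_singleton_iff, Prod.mk.injEq] at h
  rw [Con.ker_rel, FreeMonoid.lift_apply, FreeMonoid.lift_apply, h.1, h.2]
  simpa [rhs, List.map_flatten, List.prod_flatten, List.map_replicate, List.prod_replicate] using
    TorusGroup.gen_A_eq

theorem toTorus_a : toTorus (a : M17 p q) = TorusGroup.gen A := rfl

theorem toTorus_b : toTorus (b : M17 p q) = TorusGroup.b := rfl

theorem toTorus_gen (α : Bool) : toTorus (gen α : M17 p q) = TorusGroup.gen α := by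
  cases α
  · rw [gen, y, map_mul, map_pow, toTorus_a, toTorus_b, TorusGroup.gen_A_pow_mul_b]
  · rfl

theorem toTorus_a_pow_succ : toTorus (a ^ (p + 1) : M17 p q) = TorusGroup.c := by
  rw [map_pow, toTorus_a]
  rfl

/-- The canonical preimage of a normal form of nonnegative height: a negative power of `c` is
paid for by the leftmost factors `xᵉ yᶠ`, since `xᵉ yᶠ c⁻¹` is the image of
`a ^ (e - 1) * b * y ^ (f - 1)`. At negative height the truncation `k.toNat` makes it junk. -/
def mk : ℤ × List Block → M17 p q
  | (k, []) => (a ^ (p + 1)) ^ k.toNat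
  | (k, (true, e) :: (false, f) :: t) =>
    if 0 ≤ k then a ^ e * (y ^ f * mk (k, t)) else a ^ (e - 1) * b * y ^ (f - 1) * mk (k + 1, t)
  | (k, (α, e) :: t) => gen α ^ e * mk (k, t)
termination_by n => n.2.length

theorem mk_cons_false (k : ℤ) (f : ℕ) (t : List Block) :
    (mk (k, (false, f) :: t) : M17 p q) = y ^ f * mk (k, t) :=
  mk.eq_3 _ _ _ _ (by simp)

theorem mk_consPow_false (k : ℤ) (f : ℕ) (t : List Block) :
    (mk (k, consPow false f t) : M17 p q) = y ^ f * mk (k, t) := by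
  unfold consPow
  split_ifs with hf
  · rw [hf, pow_zero, one_mul]
  · exact mk_cons_false k f t

theorem mk_cons_true_of_not (hB : ¬∃ f t', t = (false, f) :: t') (k : ℤ) (e : ℕ) :
    (mk (k, (true, e) :: t) : M17 p q) = a ^ e * mk (k, t) :=
  mk.eq_3 _ _ _ _ fun f t' h _ => hB ⟨f, t', h⟩

theorem mk_succ (h : IsPos p q n) : (mk (n.1 + 1, n.2) : M17 p q) = a ^ (p + 1) * mk n := by
  induction n using mk.induct with
  | case1 k =>
    have hk : 0 ≤ k := by simpa [IsPos, height, countAdj] using h.2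
    rw [mk, mk, show (k + 1).toNat = k.toNat + 1 by omega, pow_succ']
  | case2 k e f t hk ih =>
    simp only [mk, if_pos hk, if_pos (show 0 ≤ k + 1 by omega)]
    rw [ih (isPos_of_nonneg h.1.tail.tail hk), (commute_a_pow _).left_comm,
      (commute_a_pow _).left_comm]
  | case3 k e f t hk ih =>
    have he : 1 ≤ e := (h.1.1 _ List.mem_cons_self).1
    have hf : 1 ≤ f := (h.1.tail.1 _ List.mem_cons_self).1
    simp only [mk, if_neg hk]
    split_ifs with hk'
    · rw [← mul_assoc, a_pow_mul_y_pow he hf, show k + 1 = 0 by omega]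
      simp only [mul_assoc]
    · simp only [ih h.of_cons_cons, mul_assoc]
      rw [(commute_a_pow _).left_comm, (commute_a_pow _).left_comm, (commute_a_pow _).left_comm]
  | case4 k α e t hne ih =>
    rw [mk.eq_3 _ _ _ _ hne, mk.eq_3 _ _ _ _ hne, ih (h.of_cons_of_ne hne),
      (commute_a_pow _).left_comm]

theorem toTorus_mk (h : IsPos p q n) : toTorus (mk n : M17 p q) = TorusGroup.eval n := by
  induction n using mk.induct with
  | case1 k =>
    have hk : 0 ≤ k := by simpa [IsPos, height, countAdj] using h.2
    rw [mk, map_pow, toTorus_a_pow_succ, TorusGroup.eval, TorusGroup.evalWord_nil, one_mul,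
      ← zpow_natCast, Int.toNat_of_nonneg hk]
  | case2 k e f t hk ih =>
    rw [mk, if_pos hk, map_mul, map_mul, map_pow, map_pow, ih (isPos_of_nonneg h.1.tail.tail hk),
      toTorus_a, ← gen, toTorus_gen, TorusGroup.eval_cons, TorusGroup.eval_cons]
  | case3 k e f t hk ih =>
    have he : 1 ≤ e := (h.1.1 _ List.mem_cons_self).1
    have hf : 1 ≤ f := (h.1.tail.1 _ List.mem_cons_self).1
    rw [mk, if_neg hk, map_mul, ih h.of_cons_cons, TorusGroup.eval_succ, ← mul_assoc,
      ← toTorus_a_pow_succ, ← map_mul, (commute_a_pow _).eq, ← a_pow_mul_y_pow he hf, map_mul,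
      map_pow, map_pow, toTorus_a, ← gen, toTorus_gen, TorusGroup.eval_cons, TorusGroup.eval_cons,
      mul_assoc]
  | case4 k α e t hne ih =>
    rw [mk.eq_3 _ _ _ _ hne, map_mul, map_pow, toTorus_gen, ih (h.of_cons_of_ne hne),
      TorusGroup.eval_cons]

theorem mk_cons_true_succ (he : 1 ≤ e) (k : ℤ) (t : List Block) :
    (mk (k, (true, e + 1) :: t) : M17 p q) = a * mk (k, (true, e) :: t) := by
  by_cases hB : ∃ f t', t = (false, f) :: t'
  · obtain ⟨f, t', rfl⟩ := hB
    simp only [mk]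
    split_ifs
    · rw [pow_succ', mul_assoc]
    · rw [Nat.add_sub_cancel, show e = e - 1 + 1 by omega, pow_succ']
      simp only [Nat.add_sub_cancel, mul_assoc]
  · rw [mk_cons_true_of_not hB, mk_cons_true_of_not hB, pow_succ', mul_assoc]

theorem mk_cons_true_one (h : IsPos p q (k, t)) :
    (mk (k, (true, 1) :: t) : M17 p q) = a * mk (k, t) := by
  by_cases hB : ∃ f t', t = (false, f) :: t'
  · obtain ⟨f, t', rfl⟩ := hB
    have hf : 1 ≤ f := (h.1.1 _ List.mem_cons_self).1
    simp only [mk, mk_cons_false]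
    split_ifs
    · rw [pow_one]
    · rw [mk_succ h.of_cons_false, ← mul_assoc a, a_mul_y_pow hf, Nat.sub_self, pow_zero,
        one_mul, ← mul_assoc, (commute_a_pow _).eq]
  · rw [mk_cons_true_of_not hB, pow_one]
theorem a_mul_mk_cons_true_carry [NeZero p] (h : IsPos p q (k, (true, p) :: t)) :
    a * (mk (k, (true, p) :: t) : M17 p q) = mk (k + 1, t) := by
  have hp := NeZero.one_le (n := p)
  by_cases hB : ∃ f t', t = (false, f) :: t'
  · obtain ⟨f, t', rfl⟩ := hB
    have hf : 1 ≤ f := (h.1.tail.1 _ List.mem_cons_self).1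
    by_cases hk : 0 ≤ k
    · rw [mk, if_pos hk, ← mk_cons_false, ← mul_assoc, ← pow_succ',
        mk_succ (isPos_of_nonneg h.1.tail hk)]
    · rw [mk, if_neg hk, mk_cons_false, ← mul_assoc, ← mul_assoc, ← mul_assoc, ← pow_succ',
        Nat.sub_add_cancel hp, ← y, ← pow_succ', Nat.sub_add_cancel hf]
  · rw [mk_cons_true_of_not hB, ← mul_assoc, ← pow_succ',
      mk_succ (h.of_cons_of_ne fun f t' h _ => hB ⟨f, t', h⟩)]

theorem mk_mulGen_true [NeZero p] [NeZero q] (h : IsPos p q n) :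
    (mk (mulGen p q true n) : M17 p q) = a * mk n := by
  obtain ⟨k, w⟩ := n
  obtain ⟨e, t, he, ht, -, rfl⟩ := h.1.exists_consPow true
  rcases he.lt_or_eq with he | he
  · rw [mulGen_consPow_of_lt ht k he]
    rcases Nat.eq_zero_or_pos e with rfl | he0
    · simpa [consPow] using mk_cons_true_one h
    · simpa [consPow, he0.ne'] using mk_cons_true_succ he0 k t
  · have hp : consPow true (maxExp p q true) t = (true, p) :: t := by
      simp [consPow, maxExp, NeZero.ne]
    rw [he, mulGen_consPow_maxExp, hp]
    rw [he, hp] at h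
    exact (a_mul_mk_cons_true_carry h).symm

theorem mk_mulB [NeZero p] [NeZero q] (h : IsPos p q n) :
    (mk (mulB p q n) : M17 p q) = b * mk n := by
  obtain ⟨k, w⟩ := n
  obtain ⟨f, t, hf, ht, htn, rfl⟩ := h.1.exists_consPow false
  have htpos : IsPos p q (k, t) := ⟨htn, by simpa [height, countAdj_consPow_false] using h.2⟩
  rw [mk_consPow_false]
  rcases hf.lt_or_eq with hf | hf
  · rw [mulB_consPow_of_lt ht k (show f < q from hf), mk]
    split_ifs with hk
    · have := mk_succ (isPos_of_nonneg htn hk)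
      simp only [sub_add_cancel] at this
      rw [this, pow_one, ← mul_assoc, a_mul_y_pow (Nat.le_add_left 1 f), Nat.add_sub_cancel]
      simp only [mul_assoc]
      rw [(commute_a_pow _).left_comm, (commute_a_pow _).left_comm]
    · simp only [sub_add_cancel, Nat.sub_self, pow_zero, one_mul, Nat.add_sub_cancel, mul_assoc]
  · have hq : consPow false (maxExp p q false) t = (false, q) :: t := by
      simp [consPow, maxExp, NeZero.ne]
    rw [hf, hq, mulB_cons_false_q, mk_mulGen_true htpos, a_eq, mul_assoc]
    rfl

theorem exists_isPos_mk_eq [NeZero p] [NeZero q] (g : M17 p q) : ∃ n, IsPos p q n ∧ mk n = g := by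
  induction g using induction_on with
  | one => exact ⟨(0, []), ⟨by simp [IsNormal], by simp [height, countAdj]⟩, by simp [mk]⟩
  | a_mul g ih =>
    obtain ⟨n, hn, rfl⟩ := ih
    exact ⟨_, hn.mulGen_true, mk_mulGen_true hn⟩
  | b_mul g ih =>
    obtain ⟨n, hn, rfl⟩ := ih
    exact ⟨_, hn.mulB, mk_mulB hn⟩

theorem toTorus_injective [NeZero p] [NeZero q] :
    Function.Injective (toTorus : M17 p q →* TorusGroup p q) := by
  intro g h hgh
  obtain ⟨n, hn, rfl⟩ := exists_isPos_mk_eq g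
  obtain ⟨m, hm, rfl⟩ := exists_isPos_mk_eq h
  rw [toTorus_mk hn, toTorus_mk hm] at hgh
  obtain rfl : n = m := congrArg Subtype.val
    (TorusGroup.normalFormEquiv.injective (a₁ := ⟨n, hn.1⟩) (a₂ := ⟨m, hm.1⟩) hgh)
  rfl

theorem mem_range_toTorus [NeZero p] [NeZero q] {g : TorusGroup p q} :
    g ∈ Set.range (toTorus (p := p) (q := q)) ↔ ∃ n, IsPos p q n ∧ TorusGroup.eval n = g := by
  constructor
  · rintro ⟨h, rfl⟩
    obtain ⟨n, hn, rfl⟩ := exists_isPos_mk_eq h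
    exact ⟨n, hn, (toTorus_mk hn).symm⟩
  · rintro ⟨n, hn, rfl⟩
    exact ⟨mk n, toTorus_mk hn⟩

theorem mem_or_inv_mem_range_toTorus [NeZero p] [NeZero q] (g : TorusGroup p q) :
    g ∈ Set.range (toTorus (p := p) (q := q)) ∨ g⁻¹ ∈ Set.range (toTorus (p := p) (q := q)) := by
  obtain ⟨n, rfl⟩ := TorusGroup.normalFormEquiv.surjective g
  simp only [mem_range_toTorus]
  rcases n.2.isPos_or_isPos_invNF with h | h
  · exact Or.inl ⟨n.1, h, rfl⟩
  · exact Or.inr ⟨_, h, TorusGroup.eval_invNF n.2⟩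

theorem eq_one_of_mem_range_toTorus [NeZero p] [NeZero q] {g : TorusGroup p q}
    (hg : g ∈ Set.range (toTorus (p := p) (q := q)))
    (hg' : g⁻¹ ∈ Set.range (toTorus (p := p) (q := q))) : g = 1 := by
  rw [mem_range_toTorus] at hg hg'
  obtain ⟨n, hn, rfl⟩ := hg
  obtain ⟨m, hm, hm'⟩ := hg'
  rw [← TorusGroup.eval_invNF hn.1] at hm'
  obtain rfl : m = invNF p q n := congrArg Subtype.val
    (TorusGroup.normalFormEquiv.injective (a₁ := ⟨m, hm.1⟩) (a₂ := ⟨_, hn.1.invBlocks⟩) hm')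
  rw [hn.eq_of_isPos_invNF hm]
  simp [TorusGroup.eval, TorusGroup.evalWord]

end M17

namespace MonGroup

variable {p q : ℕ}

def a : MonGroup p q := PresentedGroup.of A

def b : MonGroup p q := PresentedGroup.of B

theorem a_eq : (a : MonGroup p q) = b * (a ^ p * b) ^ q := by
  have := PresentedGroup.one_of_mem (rels := ({FreeGroup.of A *
      (FreeGroup.of B * (FreeGroup.of A ^ p * FreeGroup.of B) ^ q)⁻¹} : Set (FreeGroup Bool))) rfl
  simp only [map_mul, map_inv, map_pow] at this
  exact mul_inv_eq_one.mp this

theorem a_pow_mul_b_pow_succ : ((a : MonGroup p q) ^ p * b) ^ (q + 1) = a ^ (p + 1) := by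
  rw [pow_succ', mul_assoc, ← a_eq, ← pow_succ]

end MonGroup

section Isomorphism

variable {p q : ℕ}

noncomputable def torusToMonGroup : TorusGroup p q →* MonGroup p q :=
  PresentedGroup.toGroup (f := fun α => bif α then MonGroup.a else MonGroup.a ^ p * MonGroup.b) <|
    by
    rintro r rfl
    simp only [map_mul, map_inv, map_pow, FreeGroup.lift_apply_of, cond_true, cond_false]
    rw [mul_inv_eq_one, MonGroup.a_pow_mul_b_pow_succ]

noncomputable def monGroupToTorus : MonGroup p q →* TorusGroup p q :=
  PresentedGroup.toGroup (f := fun α => bif α then TorusGroup.gen A else TorusGroup.b) <| by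
    rintro r rfl
    simp only [map_mul, map_inv, map_pow, FreeGroup.lift_apply_of, cond_true, cond_false]
    exact mul_inv_eq_one.mpr TorusGroup.gen_A_eq

theorem torusToMonGroup_gen (α : Bool) : torusToMonGroup (TorusGroup.gen α : TorusGroup p q) =
    bif α then MonGroup.a else MonGroup.a ^ p * MonGroup.b :=
  PresentedGroup.toGroup.of _

theorem monGroupToTorus_of (α : Bool) : monGroupToTorus (PresentedGroup.of α : MonGroup p q) =
    bif α then TorusGroup.gen A else TorusGroup.b :=
  PresentedGroup.toGroup.of _

theorem monGroupToTorus_comp_torusToMonGroup :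
    monGroupToTorus.comp torusToMonGroup = MonoidHom.id (TorusGroup p q) := by
  refine PresentedGroup.ext fun α => ?_
  show monGroupToTorus (torusToMonGroup (TorusGroup.gen α : TorusGroup p q)) = TorusGroup.gen α
  rw [torusToMonGroup_gen]
  cases α
  · rw [cond_false, map_mul, map_pow, MonGroup.a, MonGroup.b, monGroupToTorus_of,
      monGroupToTorus_of, cond_true, cond_false, TorusGroup.gen_A_pow_mul_b]
  · rw [cond_true, MonGroup.a, monGroupToTorus_of, cond_true]

theorem torusToMonGroup_comp_monGroupToTorus :
    torusToMonGroup.comp monGroupToTorus = MonoidHom.id (MonGroup p q) := by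
  refine PresentedGroup.ext fun α => ?_
  show torusToMonGroup (monGroupToTorus (PresentedGroup.of α : MonGroup p q)) =
    (PresentedGroup.of α : MonGroup p q)
  rw [monGroupToTorus_of]
  cases α
  · rw [cond_false, TorusGroup.b, map_mul, map_inv, map_pow, torusToMonGroup_gen,
      torusToMonGroup_gen, cond_true, cond_false, inv_mul_cancel_left]
    rfl
  · rw [cond_true, torusToMonGroup_gen, cond_true]
    rfl

noncomputable def torusMulEquivMonGroup : TorusGroup p q ≃* MonGroup p q :=
  MonoidHom.toMulEquiv torusToMonGroup monGroupToTorus monGroupToTorus_comp_torusToMonGroup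
    torusToMonGroup_comp_monGroupToTorus

end Isomorphism

/-- **Proposition 8.1 and Corollary 8.2.** For `p, q ≥ 1`, in the monoid
`M = ⟨a, b | a = b (aᵖ b)^q⟩⁺` the element `a^{p+1}` is central, `M` is of `O`-type
(cancellative, trivial units, left- and right-divisibility linear), and the group
`⟨a, b | a = b (aᵖ b)^q⟩` is isomorphic to the torus knot group
`⟨x, y | x^{p+1} = y^{q+1}⟩` via `x ↦ a`, `y ↦ aᵖ b`. -/
theorem stmt_17 (p q : ℕ) (hp : 1 ≤ p) (hq : 1 ≤ q) :
    (∀ g : M17 p q, g * (cls p q [A]) ^ (p + 1) = (cls p q [A]) ^ (p + 1) * g) ∧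
    ((∀ a b c : M17 p q, a * b = a * c → b = c) ∧
     (∀ a b c : M17 p q, a * c = b * c → a = b) ∧
     (∀ a b : M17 p q, a * b = 1 → a = 1) ∧
     (∀ g h : M17 p q, g ∣ h ∨ h ∣ g) ∧
     (∀ g h : M17 p q, (∃ c, h = c * g) ∨ (∃ c, g = c * h))) ∧
    (∃ e : TorusGroup p q ≃* MonGroup p q,
      e (PresentedGroup.of A) = PresentedGroup.of A ∧
      e (PresentedGroup.of B) =
        (PresentedGroup.of A : MonGroup p q) ^ p * PresentedGroup.of B) := by
  have : NeZero p := ⟨by omega⟩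
  have : NeZero q := ⟨by omega⟩
  have hφ := M17.toTorus_injective (p := p) (q := q)
  refine ⟨fun g => (M17.commute_a_pow g).eq, ⟨?_, ?_, ?_, ?_, ?_⟩,
    ⟨torusMulEquivMonGroup, torusToMonGroup_gen true, torusToMonGroup_gen false⟩⟩
  · exact fun a b c h => hφ (mul_left_cancel (by rw [← map_mul, ← map_mul, h]))
  · exact fun a b c h => hφ (mul_right_cancel (by rw [← map_mul, ← map_mul, h]))
  · exact fun a b => M17.toTorus.eq_one_of_mul_eq_one hφ fun _ => M17.eq_one_of_mem_range_toTorus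
  · exact M17.toTorus.dvd_or_dvd hφ M17.mem_or_inv_mem_range_toTorus
  · exact M17.toTorus.exists_mul_eq_or hφ M17.mem_or_inv_mem_range_toTorus

end Stmt17
end

section
/- Let (a_i)_{i≥1} be generators and R_n = {a_{i-1} = a_i w_i a_i : 2 ≤ i ≤ n} with each w_i a word in {a_1,…,a_i}. If each finitely generated monoid M_n = ⟨a_1,…,a_n | R_n⟩⁺ is of O-type, then the natural maps M_n → M_m (n ≤ m) are injective, the monoid M = ⟨a_1, a_2, … | ∪R_n⟩⁺ is the direct limit (union) of the M_n, and M is of O-type; consequently M \ {1} is the positive cone of a left-invariant ordering on the group with the same presentation. -/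
/-!
Any two words over `a₀, …, a_n` are comparable for left divisibility in `M_n`, say `u t = v`.
If `u = v` also holds in `M_m` for some `m ≥ n`, then `u t = u` there, cancellation gives `t = 1`
in `M_m`, and `t` is the empty word because no relation has an empty side; so `M_n → M_m` is
injective. Every relation of `M` lies in some `R_n` and every finite set of words is written over
some `a₀, …, a_n`, so `M` is the union of the `M_n` and inherits their `O`-type properties. By
Ore's theorem the cancellative monoid `M`, in which any two elements have a common left multiple,
embeds in its group of left fractions, which is the group with the same presentation. There every
element is `a⁻¹ b` with `a, b ∈ M`, and comparability of `a` and `b` shows that the image of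
`M \ {1}` is the positive cone of a left-invariant total order.
-/

namespace Stmt19

/-! Generators `a₀, a₁, a₂, …` indexed by `ℕ`; for `i ≥ 1` the triangular relation
`a_{i-1} = a_i w_i a_i`, where `w i` is a word in the letters `a₀, …, a_i`. -/

/-- The relations of level `≤ n` (as a relation on positive words). -/
def rel (w : ℕ → List ℕ) (n : ℕ) (u v : List ℕ) : Prop :=
  ∃ i : ℕ, 1 ≤ i ∧ i ≤ n ∧ u = [i - 1] ∧ v = i :: (w i ++ [i])

/-- All the relations. -/
def relAll (w : ℕ → List ℕ) (u v : List ℕ) : Prop :=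
  ∃ i : ℕ, 1 ≤ i ∧ u = [i - 1] ∧ v = i :: (w i ++ [i])

/-- The congruence of `⟨a₀, …, a_n | R_n⟩⁺` on positive words. -/
def cn (w : ℕ → List ℕ) (n : ℕ) : Con (FreeMonoid ℕ) :=
  conGen (fun a b => rel w n (FreeMonoid.toList a) (FreeMonoid.toList b))

/-- The congruence of `⟨a₀, a₁, … | ⋃ R_n⟩⁺`. -/
def call (w : ℕ → List ℕ) : Con (FreeMonoid ℕ) :=
  conGen (fun a b => relAll w (FreeMonoid.toList a) (FreeMonoid.toList b))

/-- Words using only the letters `a₀, …, a_n`. -/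
def Bdd (n : ℕ) (u : List ℕ) : Prop := ∀ k ∈ u, k ≤ n

/-- Word-level statement that the monoid `M_n = ⟨a₀, …, a_n | R_n⟩⁺` is of `O`-type. -/
def OTn (w : ℕ → List ℕ) (n : ℕ) : Prop :=
  (∀ u v v' : List ℕ, Bdd n u → Bdd n v → Bdd n v' →
    cn w n (FreeMonoid.ofList (u ++ v)) (FreeMonoid.ofList (u ++ v')) →
    cn w n (FreeMonoid.ofList v) (FreeMonoid.ofList v')) ∧
  (∀ u u' v : List ℕ, Bdd n u → Bdd n u' → Bdd n v →
    cn w n (FreeMonoid.ofList (u ++ v)) (FreeMonoid.ofList (u' ++ v)) →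
    cn w n (FreeMonoid.ofList u) (FreeMonoid.ofList u')) ∧
  (∀ u v : List ℕ, Bdd n u → Bdd n v →
    cn w n (FreeMonoid.ofList (u ++ v)) (FreeMonoid.ofList []) →
    cn w n (FreeMonoid.ofList u) (FreeMonoid.ofList [])) ∧
  (∀ u v : List ℕ, Bdd n u → Bdd n v →
    (∃ t, Bdd n t ∧ cn w n (FreeMonoid.ofList (u ++ t)) (FreeMonoid.ofList v)) ∨
    (∃ t, Bdd n t ∧ cn w n (FreeMonoid.ofList (v ++ t)) (FreeMonoid.ofList u))) ∧
  (∀ u v : List ℕ, Bdd n u → Bdd n v →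
    (∃ t, Bdd n t ∧ cn w n (FreeMonoid.ofList (t ++ u)) (FreeMonoid.ofList v)) ∨
    (∃ t, Bdd n t ∧ cn w n (FreeMonoid.ofList (t ++ v)) (FreeMonoid.ofList u)))

/-- The direct-limit monoid `M = ⟨a₀, a₁, … | ⋃ R_n⟩⁺`. -/
def MAll (w : ℕ → List ℕ) : Type := (call w).Quotient

instance (w : ℕ → List ℕ) : Monoid (MAll w) :=
  inferInstanceAs (Monoid (call w).Quotient)

/-- The group with the same presentation. -/
def GAll (w : ℕ → List ℕ) : Type :=
  PresentedGroup {x : FreeGroup ℕ | ∃ i : ℕ, 1 ≤ i ∧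
    x = FreeGroup.of (i - 1) *
      (FreeGroup.of i * ((w i).map FreeGroup.of).prod * FreeGroup.of i)⁻¹}

instance (w : ℕ → List ℕ) : Group (GAll w) :=
  inferInstanceAs (Group (PresentedGroup _))

/-- The image in `GAll w` of the generator `a_k`. -/
def gen (w : ℕ → List ℕ) (k : ℕ) : GAll w :=
  (PresentedGroup.of k : PresentedGroup _)

theorem eq_one_of_conGen_one {α : Type*} {r : FreeMonoid α → FreeMonoid α → Prop}
    (hr : ∀ a b, r a b → a ≠ 1 ∧ b ≠ 1) {x : FreeMonoid α} (h : conGen r x 1) : x = 1 := by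
  -- Sending every letter to `0 : ℕ` separates the empty word from all others.
  let f : FreeMonoid α →* ℕ := FreeMonoid.lift fun _ => 0
  have hf : ∀ y, y ≠ 1 → f y = 0 := by
    intro y
    induction y using FreeMonoid.inductionOn' with
    | one => simp
    | of_mul => simp [f]
  have hker : conGen r ≤ Con.ker f := Con.conGen_le.mpr fun a b hab => by
    rw [Con.ker_rel, hf a (hr a b hab).1, hf b (hr a b hab).2]
  by_contra hx
  simpa [Con.ker_rel, hf x hx] using hker h

theorem exists_leftInvariant_strictTotalOrder_of_cone {G : Type*} [Group G] (P : Set G)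
    (one_notMem : 1 ∉ P) (mul_mem : ∀ a ∈ P, ∀ b ∈ P, a * b ∈ P)
    (total : ∀ g, g ∈ P ∨ g = 1 ∨ g⁻¹ ∈ P) :
    ∃ r : G → G → Prop, IsStrictTotalOrder G r ∧ (∀ h g g' : G, r g g' → r (h * g) (h * g')) ∧
      ∀ g, r 1 g ↔ g ∈ P := by
  refine ⟨fun g g' => g⁻¹ * g' ∈ P, ?_, fun h g g' hgg' => by simpa [mul_assoc] using hgg',
    fun g => by simp⟩
  have irrefl (g : G) : g⁻¹ * g ∉ P := by simpa using one_notMem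
  have trans (a b c : G) (hab : a⁻¹ * b ∈ P) (hbc : b⁻¹ * c ∈ P) : a⁻¹ * c ∈ P := by
    simpa [mul_assoc] using mul_mem _ hab _ hbc
  have trichotomous (a b : G) (hab : a⁻¹ * b ∉ P) (hba : b⁻¹ * a ∉ P) : a = b := by
    rcases total (a⁻¹ * b) with h | h | h
    · exact absurd h hab
    · exact inv_mul_eq_one.mp h
    · rw [mul_inv_rev, inv_inv] at h
      exact absurd h hba
  exact { trichotomous, irrefl, trans }

section OreMonoid

universe u

variable {M : Type u} [Monoid M]

noncomputable abbrev oreSetTop [IsRightCancelMul M] (h : ∀ a b : M, ∃ c d : M, c * a = d * b) :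
    OreLocalization.OreSet (⊤ : Submonoid M) where
  ore_right_cancel _ _ _ hab := ⟨1, by rw [mul_right_cancel hab]⟩
  oreNum a s := (h a s).choose_spec.choose
  oreDenom a s := ⟨(h a s).choose, trivial⟩
  ore_eq a s := (h a s).choose_spec.choose_spec

theorem injective_of_exists_mul_eq_mul [IsCancelMul M] {G : Type*} [Group G]
    (h : ∀ a b : M, ∃ c d : M, c * a = d * b) (φ : M →* G)
    (hφ : ∀ (H : Type u) [Group H] (f : M →* H), ∃ ψ : G →* H, ∀ x, ψ (φ x) = f x) :
    Function.Injective φ := by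
  let := oreSetTop h
  -- Ore: `M` embeds in the units of its Ore localization, through which `φ` factors.
  obtain ⟨ψ, hψ⟩ := hφ _ <| Units.liftRight OreLocalization.numeratorHom
    (fun x => OreLocalization.numeratorUnit (⟨x, Submonoid.mem_top x⟩ : (⊤ : Submonoid M)))
    fun _ => rfl
  intro a b hab
  have hdiv : a /ₒ (1 : (⊤ : Submonoid M)) = b /ₒ 1 := by
    have := congrArg (fun g => ((ψ g : _ˣ) : OreLocalization (⊤ : Submonoid M) M)) hab
    simp only [hψ] at this
    exact this
  obtain ⟨u, v, hba, huv⟩ := OreLocalization.oreDiv_eq_iff.mp hdiv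
  simp only [OneMemClass.coe_one, mul_one] at huv
  simp only [Submonoid.smul_def, smul_eq_mul, huv] at hba
  exact (mul_left_cancel hba).symm

theorem exists_eq_inv_mul_of_closure_range {G : Type*} [Group G] (φ : M →* G)
    (h : ∀ a b : M, ∃ c d : M, c * a = d * b) (hφ : Subgroup.closure (Set.range φ) = ⊤)
    (g : G) : ∃ a b, g = (φ a)⁻¹ * φ b := by
  have hg : g ∈ Subgroup.closure (Set.range φ) := hφ ▸ Subgroup.mem_top g
  induction hg using Subgroup.closure_induction with
  | mem _ hx =>
    obtain ⟨x, rfl⟩ := hx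
    exact ⟨1, x, by simp⟩
  | one => exact ⟨1, 1, by simp⟩
  | mul _ _ _ _ hx hy =>
    obtain ⟨a, b, rfl⟩ := hx
    obtain ⟨c, d, rfl⟩ := hy
    obtain ⟨s, t, hst⟩ := h b c
    have hbc : φ b * (φ c)⁻¹ = (φ s)⁻¹ * φ t := by
      rw [mul_inv_eq_iff_eq_mul, mul_assoc, eq_inv_mul_iff_mul_eq, ← map_mul, ← map_mul, hst]
    refine ⟨s * a, t * d, ?_⟩
    rw [map_mul, map_mul, mul_inv_rev, mul_assoc, ← mul_assoc (φ b), hbc]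
    group
  | inv _ _ hx =>
    obtain ⟨a, b, rfl⟩ := hx
    exact ⟨b, a, by group⟩

theorem exists_leftInvariant_strictTotalOrder_of_injective {G : Type*} [Group G] (φ : M →* G)
    (hφ : Function.Injective φ) (hgen : Subgroup.closure (Set.range φ) = ⊤)
    (hconic : ∀ a b : M, a * b = 1 → a = 1) (hdvd : ∀ a b : M, a ∣ b ∨ b ∣ a)
    (hore : ∀ a b : M, ∃ c d : M, c * a = d * b) :
    ∃ r : G → G → Prop, IsStrictTotalOrder G r ∧ (∀ h g g' : G, r g g' → r (h * g) (h * g')) ∧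
      ∀ g, r 1 g ↔ ∃ x ≠ 1, g = φ x := by
  refine exists_leftInvariant_strictTotalOrder_of_cone {g | ∃ x ≠ 1, g = φ x} ?_ ?_ ?_
  · rintro ⟨x, hx, h⟩
    exact hx (hφ (by rw [← h, map_one]))
  · rintro _ ⟨a, ha, rfl⟩ _ ⟨b, -, rfl⟩
    exact ⟨a * b, fun hab => ha (hconic a b hab), (map_mul φ a b).symm⟩
  · intro g
    obtain ⟨a, b, rfl⟩ := exists_eq_inv_mul_of_closure_range φ hore hgen g
    rcases hdvd a b with ⟨t, rfl⟩ | ⟨t, rfl⟩ <;> rcases eq_or_ne t 1 with rfl | ht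
    · simp
    · exact .inl ⟨t, ht, by simp⟩
    · simp
    · exact .inr (.inr ⟨t, ht, by simp⟩)

end OreMonoid

theorem bdd_append {n : ℕ} {u v : List ℕ} : Bdd n (u ++ v) ↔ Bdd n u ∧ Bdd n v :=
  List.forall_mem_append

theorem exists_bdd (u : List ℕ) : ∃ n, Bdd n u :=
  ⟨u.sum, fun _ hk => List.le_sum_of_mem hk⟩

theorem Bdd.mono {n m : ℕ} {u : List ℕ} (hu : Bdd n u) (hnm : n ≤ m) : Bdd m u :=
  fun k hk => (hu k hk).trans hnm

section Presentation

variable (w : ℕ → List ℕ)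

theorem cn_mono : Monotone (cn w) := fun _ _ hnm =>
  Con.conGen_le.mpr fun x y ⟨i, hi, hin, hx, hy⟩ => ConGen.Rel.of x y ⟨i, hi, hin.trans hnm, hx, hy⟩

theorem cn_le_call (n : ℕ) : cn w n ≤ call w :=
  Con.conGen_le.mpr fun x y ⟨i, hi, _, hx, hy⟩ => ConGen.Rel.of x y ⟨i, hi, hx, hy⟩

theorem call_iff_exists_cn {x y : FreeMonoid ℕ} : call w x y ↔ ∃ n, cn w n x y := by
  refine ⟨fun h => ?_, fun ⟨n, h⟩ => cn_le_call w n h⟩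
  induction h with
  | of x y hxy =>
    obtain ⟨i, hi, hx, hy⟩ := hxy
    exact ⟨i, ConGen.Rel.of x y ⟨i, hi, le_rfl, hx, hy⟩⟩
  | refl x => exact ⟨0, (cn w 0).refl x⟩
  | symm _ ih =>
    obtain ⟨n, h⟩ := ih
    exact ⟨n, (cn w n).symm h⟩
  | trans _ _ ih₁ ih₂ =>
    obtain ⟨n, h₁⟩ := ih₁
    obtain ⟨m, h₂⟩ := ih₂
    exact ⟨max n m, (cn w _).trans (cn_mono w (le_max_left n m) h₁)
      (cn_mono w (le_max_right n m) h₂)⟩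
  | mul _ _ ih₁ ih₂ =>
    obtain ⟨n, h₁⟩ := ih₁
    obtain ⟨m, h₂⟩ := ih₂
    exact ⟨max n m, (cn w _).mul (cn_mono w (le_max_left n m) h₁)
      (cn_mono w (le_max_right n m) h₂)⟩

theorem eq_nil_of_cn_nil {n : ℕ} {u : List ℕ} (h : cn w n (FreeMonoid.ofList u) 1) : u = [] :=
  FreeMonoid.ofList.injective <| eq_one_of_conGen_one
    (fun _ _ ⟨_, _, _, ha, hb⟩ => ⟨fun h1 => by simp [h1] at ha, fun h1 => by simp [h1] at hb⟩) h

theorem eq_nil_of_cn_append_self {m : ℕ} (hm : OTn w m) {u t : List ℕ} (hu : Bdd m u)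
    (ht : Bdd m t) (h : cn w m (FreeMonoid.ofList (u ++ t)) (FreeMonoid.ofList u)) : t = [] :=
  eq_nil_of_cn_nil w <| hm.1 u t [] hu ht (fun _ h => absurd h List.not_mem_nil)
    (by rwa [List.append_nil])

theorem cn_of_cn_append_of_le {n m : ℕ} (hnm : n ≤ m) (hm : OTn w m) {u v t : List ℕ}
    (hu : Bdd n u) (ht : Bdd n t) (hn : cn w n (FreeMonoid.ofList (u ++ t)) (FreeMonoid.ofList v))
    (h : cn w m (FreeMonoid.ofList u) (FreeMonoid.ofList v)) :
    cn w n (FreeMonoid.ofList u) (FreeMonoid.ofList v) := by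
  obtain rfl : t = [] := eq_nil_of_cn_append_self w hm (hu.mono hnm) (ht.mono hnm)
    ((cn w m).trans (cn_mono w hnm hn) ((cn w m).symm h))
  rwa [List.append_nil] at hn

theorem cn_of_cn_of_le {n m : ℕ} (hnm : n ≤ m) (hn : OTn w n) (hm : OTn w m) {u v : List ℕ}
    (hu : Bdd n u) (hv : Bdd n v) (h : cn w m (FreeMonoid.ofList u) (FreeMonoid.ofList v)) :
    cn w n (FreeMonoid.ofList u) (FreeMonoid.ofList v) := by
  rcases hn.2.2.2.1 u v hu hv with ⟨t, ht, hut⟩ | ⟨t, ht, hvt⟩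
  · exact cn_of_cn_append_of_le w hnm hm hu ht hut h
  · exact (cn w n).symm (cn_of_cn_append_of_le w hnm hm hv ht hvt ((cn w m).symm h))

theorem call_iff_cn (hOT : ∀ n, OTn w n) {n : ℕ} {u v : List ℕ} (hu : Bdd n u) (hv : Bdd n v) :
    call w (FreeMonoid.ofList u) (FreeMonoid.ofList v) ↔
      cn w n (FreeMonoid.ofList u) (FreeMonoid.ofList v) := by
  refine ⟨fun h => ?_, fun h => cn_le_call w n h⟩
  obtain ⟨m, hm⟩ := (call_iff_exists_cn w).mp h
  exact cn_of_cn_of_le w (le_max_left n m) (hOT n) (hOT _) hu hv (cn_mono w (le_max_right n m) hm)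

theorem eq_nil_of_call_nil {u : List ℕ} (h : call w (FreeMonoid.ofList u) 1) : u = [] := by
  obtain ⟨n, hn⟩ := (call_iff_exists_cn w).mp h
  exact eq_nil_of_cn_nil w hn

end Presentation

namespace MAll

variable (w : ℕ → List ℕ)

def mk (u : List ℕ) : MAll w := (call w).toQuotient (FreeMonoid.ofList u)

theorem mk_surjective : Function.Surjective (mk w) := by
  intro a
  induction a using Con.induction_on with
  | H x => exact ⟨x.toList, rfl⟩

theorem mk_append (u v : List ℕ) : mk w (u ++ v) = mk w u * mk w v := rfl

theorem mk_eq_mk {u v : List ℕ} :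
    mk w u = mk w v ↔ call w (FreeMonoid.ofList u) (FreeMonoid.ofList v) := Con.eq _

theorem mk_eq_one {u : List ℕ} : mk w u = 1 ↔ u = [] :=
  ⟨fun h => eq_nil_of_call_nil w ((mk_eq_mk w).mp h), fun h => h ▸ rfl⟩

theorem mk_eq_prod (u : List ℕ) : mk w u = (u.map fun k => mk w [k]).prod := by
  induction u with
  | nil => rfl
  | cons k u ih => rw [List.map_cons, List.prod_cons, ← ih, ← mk_append, List.singleton_append]

theorem map_mk {H : Type*} [Monoid H] (f : MAll w →* H) (u : List ℕ) :
    f (mk w u) = (u.map fun k => f (mk w [k])).prod := by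
  rw [mk_eq_prod, map_list_prod, List.map_map]
  rfl

theorem mk_sub_one {i : ℕ} (hi : 1 ≤ i) : mk w [i - 1] = mk w (i :: (w i ++ [i])) :=
  (mk_eq_mk w).mpr <| ConGen.Rel.of _ _ ⟨i, hi, rfl, rfl⟩

theorem eq_one_of_mul_eq_one {a b : MAll w} (h : a * b = 1) : a = 1 := by
  obtain ⟨u, rfl⟩ := mk_surjective w a
  obtain ⟨v, rfl⟩ := mk_surjective w b
  rw [← mk_append, mk_eq_one, List.append_eq_nil_iff] at h
  exact (mk_eq_one w).mpr h.1

variable {w}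

theorem mul_left_cancel (hOT : ∀ n, OTn w n) {a b c : MAll w} (h : a * b = a * c) : b = c := by
  obtain ⟨u, rfl⟩ := mk_surjective w a
  obtain ⟨v, rfl⟩ := mk_surjective w b
  obtain ⟨v', rfl⟩ := mk_surjective w c
  obtain ⟨n, hn⟩ := exists_bdd (u ++ v ++ v')
  simp only [bdd_append] at hn
  obtain ⟨⟨hu, hv⟩, hv'⟩ := hn
  rw [← mk_append, ← mk_append, mk_eq_mk, call_iff_cn w hOT (bdd_append.mpr ⟨hu, hv⟩)
    (bdd_append.mpr ⟨hu, hv'⟩)] at h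
  rw [mk_eq_mk, call_iff_cn w hOT hv hv']
  exact (hOT n).1 u v v' hu hv hv' h

theorem mul_right_cancel (hOT : ∀ n, OTn w n) {a b c : MAll w} (h : a * c = b * c) : a = b := by
  obtain ⟨u, rfl⟩ := mk_surjective w a
  obtain ⟨u', rfl⟩ := mk_surjective w b
  obtain ⟨v, rfl⟩ := mk_surjective w c
  obtain ⟨n, hn⟩ := exists_bdd (u ++ u' ++ v)
  simp only [bdd_append] at hn
  obtain ⟨⟨hu, hu'⟩, hv⟩ := hn
  rw [← mk_append, ← mk_append, mk_eq_mk, call_iff_cn w hOT (bdd_append.mpr ⟨hu, hv⟩)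
    (bdd_append.mpr ⟨hu', hv⟩)] at h
  rw [mk_eq_mk, call_iff_cn w hOT hu hu']
  exact (hOT n).2.1 u u' v hu hu' hv h

theorem isCancelMul (hOT : ∀ n, OTn w n) : IsCancelMul (MAll w) where
  mul_left_cancel _ _ _ := mul_left_cancel hOT
  mul_right_cancel _ _ _ := mul_right_cancel hOT

theorem dvd_total (hOT : ∀ n, OTn w n) (a b : MAll w) : a ∣ b ∨ b ∣ a := by
  obtain ⟨u, rfl⟩ := mk_surjective w a
  obtain ⟨v, rfl⟩ := mk_surjective w b
  obtain ⟨n, hn⟩ := exists_bdd (u ++ v)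
  obtain ⟨hu, hv⟩ := bdd_append.mp hn
  rcases (hOT n).2.2.2.1 u v hu hv with ⟨t, -, h⟩ | ⟨t, -, h⟩
  · exact .inl (Dvd.intro (mk w t) ((mk_eq_mk w).mpr (cn_le_call w n h)))
  · exact .inr (Dvd.intro (mk w t) ((mk_eq_mk w).mpr (cn_le_call w n h)))

theorem exists_mul_eq_or_exists_mul_eq (hOT : ∀ n, OTn w n) (a b : MAll w) :
    (∃ c, b = c * a) ∨ (∃ c, a = c * b) := by
  obtain ⟨u, rfl⟩ := mk_surjective w a
  obtain ⟨v, rfl⟩ := mk_surjective w b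
  obtain ⟨n, hn⟩ := exists_bdd (u ++ v)
  obtain ⟨hu, hv⟩ := bdd_append.mp hn
  rcases (hOT n).2.2.2.2 u v hu hv with ⟨t, -, h⟩ | ⟨t, -, h⟩
  · exact .inl ⟨mk w t, ((mk_eq_mk w).mpr (cn_le_call w n h)).symm⟩
  · exact .inr ⟨mk w t, ((mk_eq_mk w).mpr (cn_le_call w n h)).symm⟩

theorem exists_mul_eq_mul (hOT : ∀ n, OTn w n) (a b : MAll w) : ∃ c d, c * a = d * b := by
  rcases exists_mul_eq_or_exists_mul_eq hOT a b with ⟨c, rfl⟩ | ⟨c, rfl⟩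
  · exact ⟨c, 1, (one_mul _).symm⟩
  · exact ⟨1, c, one_mul _⟩

end MAll

section Group

variable (w : ℕ → List ℕ)

def rels : Set (FreeGroup ℕ) :=
  {x : FreeGroup ℕ | ∃ i : ℕ, 1 ≤ i ∧
    x = FreeGroup.of (i - 1) *
      (FreeGroup.of i * ((w i).map FreeGroup.of).prod * FreeGroup.of i)⁻¹}

theorem gen_sub_one {i : ℕ} (hi : 1 ≤ i) :
    gen w (i - 1) = gen w i * ((w i).map (gen w)).prod * gen w i := by
  have := PresentedGroup.mk_eq_mk_of_mul_inv_mem (rels := rels w) ⟨i, hi, rfl⟩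
  simp only [map_mul, map_list_prod, List.map_map] at this
  exact this

def toGAll : MAll w →* GAll w :=
  (call w).lift (FreeMonoid.lift (gen w)) <| Con.conGen_le.mpr fun x y ⟨i, hi, hx, hy⟩ => by
    rw [Con.ker_rel, ← FreeMonoid.ofList_toList x, ← FreeMonoid.ofList_toList y, hx, hy]
    simp [gen_sub_one w hi, mul_assoc]

theorem toGAll_mk (u : List ℕ) : toGAll w (MAll.mk w u) = (u.map (gen w)).prod :=
  (Con.lift_coe _ _).trans (FreeMonoid.lift_ofList _ _)

theorem exists_hom_comp_toGAll {H : Type} [Group H] (f : MAll w →* H) :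
    ∃ ψ : GAll w →* H, ∀ x, ψ (toGAll w x) = f x := by
  let g : ℕ → H := fun k => f (MAll.mk w [k])
  have hrel : ∀ r ∈ rels w, FreeGroup.lift g r = 1 := by
    rintro _ ⟨i, hi, rfl⟩
    have hcomp : ⇑(FreeGroup.lift g) ∘ FreeGroup.of = g := funext fun _ => FreeGroup.lift_apply_of
    rw [map_mul, map_inv, mul_inv_eq_one, map_mul, map_mul, map_list_prod, List.map_map, hcomp,
      FreeGroup.lift_apply_of, FreeGroup.lift_apply_of]
    have := congrArg f (MAll.mk_sub_one w hi)
    rw [MAll.map_mk, MAll.map_mk] at this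
    simpa [g, mul_assoc] using this
  let ψ : GAll w →* H := PresentedGroup.toGroup hrel
  refine ⟨ψ, fun x => ?_⟩
  obtain ⟨u, rfl⟩ := MAll.mk_surjective w x
  rw [toGAll_mk, map_list_prod, List.map_map, MAll.map_mk]
  exact congrArg List.prod (List.map_congr_left fun k _ => PresentedGroup.toGroup.of hrel)

theorem closure_range_toGAll : Subgroup.closure (Set.range (toGAll w)) = ⊤ := by
  refine eq_top_iff.mpr ((PresentedGroup.closure_range_of _).symm.le.trans
    (Subgroup.closure_mono ?_))
  rintro _ ⟨k, rfl⟩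
  exact ⟨MAll.mk w [k], by rw [toGAll_mk, List.map_singleton, List.prod_singleton]; rfl⟩

theorem exists_toGAll_eq_iff {g : GAll w} :
    (∃ x ≠ 1, g = toGAll w x) ↔ ∃ u : List ℕ, u ≠ [] ∧ g = (u.map (gen w)).prod := by
  constructor
  · rintro ⟨x, hx, rfl⟩
    obtain ⟨u, rfl⟩ := MAll.mk_surjective w x
    exact ⟨u, mt (MAll.mk_eq_one w).mpr hx, toGAll_mk w u⟩
  · rintro ⟨u, hu, rfl⟩
    exact ⟨MAll.mk w u, mt (MAll.mk_eq_one w).mp hu, (toGAll_mk w u).symm⟩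

end Group

theorem stmt_19_general (w : ℕ → List ℕ) (hOT : ∀ n : ℕ, OTn w n) :
    -- (a) injectivity of the natural maps `M_n → M_m`:
    (∀ n m : ℕ, n ≤ m → ∀ u v : List ℕ, Bdd n u → Bdd n v →
      cn w m (FreeMonoid.ofList u) (FreeMonoid.ofList v) →
      cn w n (FreeMonoid.ofList u) (FreeMonoid.ofList v)) ∧
    -- (b) `M` is the direct limit (union) of the `M_n`:
    (∀ u v : List ℕ,
      call w (FreeMonoid.ofList u) (FreeMonoid.ofList v) ↔
      ∃ n : ℕ, cn w n (FreeMonoid.ofList u) (FreeMonoid.ofList v)) ∧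
    -- (c) `M` is of `O`-type:
    ((∀ a b c : MAll w, a * b = a * c → b = c) ∧
     (∀ a b c : MAll w, a * c = b * c → a = b) ∧
     (∀ a b : MAll w, a * b = 1 → a = 1) ∧
     (∀ g h : MAll w, g ∣ h ∨ h ∣ g) ∧
     (∀ g h : MAll w, (∃ c, h = c * g) ∨ (∃ c, g = c * h))) ∧
    -- (d) `M \ {1}` is the positive cone of a left-invariant ordering on the group:
    (∃ r : GAll w → GAll w → Prop, IsStrictTotalOrder (GAll w) r ∧
      (∀ h g g' : GAll w, r g g' → r (h * g) (h * g')) ∧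
      (∀ g : GAll w, r 1 g ↔ ∃ u : List ℕ, u ≠ [] ∧ g = (u.map (gen w)).prod)) := by
  have := MAll.isCancelMul hOT
  have hore := MAll.exists_mul_eq_mul hOT
  have hinj : Function.Injective (toGAll w) :=
    injective_of_exists_mul_eq_mul hore (toGAll w) fun _ _ => exists_hom_comp_toGAll w
  obtain ⟨r, hr, hleft, hpos⟩ := exists_leftInvariant_strictTotalOrder_of_injective (toGAll w) hinj
    (closure_range_toGAll w) (fun _ _ => MAll.eq_one_of_mul_eq_one w) (MAll.dvd_total hOT) hore
  exact ⟨fun n m hnm _ _ hu hv => cn_of_cn_of_le w hnm (hOT n) (hOT m) hu hv,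
    fun _ _ => call_iff_exists_cn w,
    ⟨fun _ _ _ => MAll.mul_left_cancel hOT, fun _ _ _ => MAll.mul_right_cancel hOT,
      fun _ _ => MAll.eq_one_of_mul_eq_one w, MAll.dvd_total hOT,
      MAll.exists_mul_eq_or_exists_mul_eq hOT⟩,
    r, hr, hleft, fun _ => (hpos _).trans (exists_toGAll_eq_iff w)⟩

/-- **Proposition 10.16.** Suppose each `w i` (for `i ≥ 1`) is a word in `a₀, …, a_i`,
and each finitely generated monoid `M_n = ⟨a₀, …, a_n | R_n⟩⁺` is of `O`-type. Then the
natural maps `M_n → M_m` (`n ≤ m`) are injective, the monoid `M = ⟨a₀, a₁, … | ⋃ R_n⟩⁺`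
is the direct limit (union) of the `M_n`, `M` is of `O`-type, and `M \ {1}` is the
positive cone of a left-invariant ordering on the group with the same presentation. -/
theorem stmt_19 (w : ℕ → List ℕ) (hw : ∀ i : ℕ, 1 ≤ i → ∀ k ∈ w i, k ≤ i)
    (hOT : ∀ n : ℕ, OTn w n) :
    -- (a) injectivity of the natural maps `M_n → M_m`:
    (∀ n m : ℕ, n ≤ m → ∀ u v : List ℕ, Bdd n u → Bdd n v →
      cn w m (FreeMonoid.ofList u) (FreeMonoid.ofList v) →
      cn w n (FreeMonoid.ofList u) (FreeMonoid.ofList v)) ∧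
    -- (b) `M` is the direct limit (union) of the `M_n`:
    (∀ u v : List ℕ,
      call w (FreeMonoid.ofList u) (FreeMonoid.ofList v) ↔
      ∃ n : ℕ, cn w n (FreeMonoid.ofList u) (FreeMonoid.ofList v)) ∧
    -- (c) `M` is of `O`-type:
    ((∀ a b c : MAll w, a * b = a * c → b = c) ∧
     (∀ a b c : MAll w, a * c = b * c → a = b) ∧
     (∀ a b : MAll w, a * b = 1 → a = 1) ∧
     (∀ g h : MAll w, g ∣ h ∨ h ∣ g) ∧
     (∀ g h : MAll w, (∃ c, h = c * g) ∨ (∃ c, g = c * h))) ∧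
    -- (d) `M \ {1}` is the positive cone of a left-invariant ordering on the group:
    (∃ r : GAll w → GAll w → Prop, IsStrictTotalOrder (GAll w) r ∧
      (∀ h g g' : GAll w, r g g' → r (h * g) (h * g')) ∧
      (∀ g : GAll w, r 1 g ↔ ∃ u : List ℕ, u ≠ [] ∧ g = (u.map (gen w)).prod)) :=
  stmt_19_general w hOT

end Stmt19
end
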